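/- arXiv:1011.3236 — 8 statements merged into one kernel-verified Lean document; each statement's English description precedes it below -/
import Mathlib

section
/- For every finite abelian group G and every finite tree T rooted at a non-leaf vertex, the restriction map sending a flow f to the function on leaves l ↦ f(parent edge of l) takes values in the set of sockets (i.e. the values of any flow on the leaf edges sum to 0), and this restriction map is a bijection between the set of flows of (T,G) and the set of sockets of (T,G). -/
/-!
A finite rooted tree is encoded by a finite vertex type `V`, a root, and a parent
function such that iterating the parent function from any vertex reaches the root.
Edges correspond bijectively to non-root vertices: the edge attached to a non-root
vertex `v` is the edge `{v, parent v}`, i.e. the parent edge of `v`.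
-/
structure PhyloTree where
  V : Type
  [fintypeV : Fintype V]
  [decEqV : DecidableEq V]
  root : V
  parent : V → V
  parent_root : parent root = root
  reach : ∀ v : V, ∃ n : ℕ, parent^[n] v = root

attribute [instance] PhyloTree.fintypeV PhyloTree.decEqV

namespace PhyloTree

variable (T : PhyloTree)

/-- Edges of the tree, identified with non-root vertices (each non-root vertex
corresponds to its parent edge). -/
def Edge : Type := {v : T.V // v ≠ T.root}

instance : Fintype T.Edge := Subtype.fintype _
instance : DecidableEq T.Edge := Subtype.instDecidableEq

/-- The children of a vertex `v`. -/
def children (v : T.V) : Finset T.V :=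
  Finset.univ.filter fun u => T.parent u = v ∧ u ≠ v

/-- The degree of a vertex: the number of its children, plus one for the parent
edge if it is not the root. -/
def degree (v : T.V) : ℕ :=
  (T.children v).card + (if v = T.root then 0 else 1)

/-- A leaf is a vertex of degree one.  (We record `v ≠ root` as well; under the
standing hypothesis that the root is not a leaf this is no extra condition.) -/
def IsLeaf (v : T.V) : Prop := T.degree v = 1 ∧ v ≠ T.root

instance : DecidablePred T.IsLeaf := fun v => by unfold IsLeaf; infer_instance

/-- The type of leaves. -/
def Leaf : Type := {v : T.V // T.IsLeaf v}

instance : Fintype T.Leaf := Subtype.fintype _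

/-- The leaf edge of a leaf, i.e. its parent edge. -/
def leafEdge (l : T.Leaf) : T.Edge := ⟨l.1, l.2.2⟩

variable {G : Type} [AddCommGroup G]

/-- A flow: a function on edges such that the values on the edges incident to the
root sum to `0`, and for every non-leaf vertex `v ≠ root` the value on the parent
edge of `v` equals the sum of the values on the other edges incident to `v`
(i.e. the parent edges of the children of `v`). -/
def IsFlow (f : T.Edge → G) : Prop :=
  (∑ e : T.Edge, if T.parent e.1 = T.root then f e else 0) = 0 ∧
  ∀ e : T.Edge, ¬ T.IsLeaf e.1 →
    f e = ∑ e' : T.Edge, if T.parent e'.1 = e.1 ∧ e'.1 ≠ e.1 then f e' else 0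

/-- The restriction of a function on edges to the leaf edges. -/
def leafRes (f : T.Edge → G) : T.Leaf → G := fun l => f (T.leafEdge l)

end PhyloTree


/-!
Every edge value of a flow is forced: by induction from the leaves up, the value on the parent
edge of `v` is the sum of the socket values over the leaves below `v`. Conversely, these subtree
sums satisfy every non-root flow condition, because the leaves below a non-leaf vertex are
partitioned by its children, and the root condition says exactly that the socket sums to `0`.
-/

namespace PhyloTree

open Finset Function

variable (T : PhyloTree)

/-- `T.Below u v`: `v` lies on the path from `u` to the root. -/
def Below (u v : T.V) : Prop := ∃ n, T.parent^[n] u = v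

def StrictBelow (u v : T.V) : Prop := T.Below u v ∧ u ≠ v

def childEdges (v : T.V) : Finset T.Edge :=
  univ.filter fun e => T.parent e.1 = v ∧ e.1 ≠ v

open Classical in
noncomputable def leavesBelow (v : T.V) : Finset T.Leaf :=
  univ.filter fun l => T.Below l.1 v

instance : DecidableEq T.Leaf := Subtype.instDecidableEq

lemma iterate_parent_root (n : ℕ) : T.parent^[n] T.root = T.root :=
  iterate_fixed T.parent_root n

variable {T}

lemma eq_root_of_isPeriodicPt {v : T.V} {p : ℕ} (hp : 0 < p) (h : IsPeriodicPt T.parent p v) :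
    v = T.root := by
  obtain ⟨N, hN⟩ := T.reach v
  calc v = T.parent^[p * N - N + N] v := by
          rw [Nat.sub_add_cancel (Nat.le_mul_of_pos_left N hp)]; exact (h.mul_const N).eq.symm
    _ = T.root := by rw [iterate_add_apply, hN, iterate_parent_root]

lemma Below.refl (u : T.V) : T.Below u u := ⟨0, rfl⟩

lemma below_parent (u : T.V) : T.Below u (T.parent u) := ⟨1, rfl⟩

lemma Below.trans {u v w : T.V} (huv : T.Below u v) (hvw : T.Below v w) : T.Below u w := by
  obtain ⟨a, rfl⟩ := huv
  obtain ⟨b, rfl⟩ := hvw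
  exact ⟨b + a, iterate_add_apply _ _ _ _⟩

lemma Below.antisymm {u v : T.V} (huv : T.Below u v) (hvu : T.Below v u) : u = v := by
  obtain ⟨a, rfl⟩ := huv
  obtain ⟨b, hb⟩ := hvu
  rcases Nat.eq_zero_or_pos (b + a) with hab | hab
  · rw [Nat.eq_zero_of_add_eq_zero_left hab]; rfl
  · have hu := eq_root_of_isPeriodicPt hab (by rwa [IsPeriodicPt, IsFixedPt, iterate_add_apply])
    rw [hu, iterate_parent_root]

lemma Below.total {l a b : T.V} (ha : T.Below l a) (hb : T.Below l b) :
    T.Below a b ∨ T.Below b a := by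
  obtain ⟨m, rfl⟩ := ha
  obtain ⟨n, rfl⟩ := hb
  rcases le_total m n with h | h
  · exact .inl ⟨n - m, by rw [← iterate_add_apply, Nat.sub_add_cancel h]⟩
  · exact .inr ⟨m - n, by rw [← iterate_add_apply, Nat.sub_add_cancel h]⟩

lemma Below.eq_of_parent_eq {c₁ c₂ : T.V} (h : T.Below c₁ c₂)
    (hp : T.parent c₁ = T.parent c₂) (hc₂ : c₂ ≠ T.parent c₂) : c₁ = c₂ := by
  obtain ⟨_ | n, hn⟩ := h
  · exact hn
  · have : T.Below (T.parent c₂) c₂ := ⟨n, by rwa [← hp, ← iterate_succ_apply]⟩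
    exact absurd (this.antisymm (below_parent c₂)).symm hc₂

lemma Below.exists_child {u v : T.V} (h : T.Below u v) (hne : u ≠ v) :
    ∃ c, T.parent c = v ∧ c ≠ v ∧ T.Below u c := by
  obtain ⟨n, hn⟩ := h
  induction n generalizing u with
  | zero => exact absurd hn hne
  | succ n ih =>
    by_cases hu : T.parent u = v
    · exact ⟨u, hu, hne, .refl u⟩
    · obtain ⟨c, hc, hcv, hbelow⟩ := ih hu (by rwa [iterate_succ_apply] at hn)
      exact ⟨c, hc, hcv, (below_parent u).trans hbelow⟩

instance : IsTrans T.V T.StrictBelow where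
  trans _ _ _ huv hvw :=
    ⟨huv.1.trans hvw.1, fun h => huv.2 (huv.1.antisymm (h ▸ hvw.1))⟩

instance : Std.Irrefl T.StrictBelow where
  irrefl _ h := h.2 rfl

lemma wellFounded_strictBelow : WellFounded T.StrictBelow :=
  Finite.wellFounded_of_trans_of_irrefl _

lemma mem_childEdges {v : T.V} {e : T.Edge} :
    e ∈ T.childEdges v ↔ T.parent e.1 = v ∧ e.1 ≠ v := by
  simp [childEdges]

lemma strictBelow_of_mem_childEdges {v : T.V} {e : T.Edge} (he : e ∈ T.childEdges v) :
    T.StrictBelow e.1 v :=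
  ⟨(mem_childEdges.1 he).1 ▸ below_parent e.1, (mem_childEdges.1 he).2⟩

lemma mem_leavesBelow {v : T.V} {l : T.Leaf} : l ∈ T.leavesBelow v ↔ T.Below l.1 v := by
  simp [leavesBelow]

variable (T)

lemma leavesBelow_root : T.leavesBelow T.root = univ :=
  eq_univ_of_forall fun l => mem_leavesBelow.2 (T.reach l.1)

lemma children_eq_empty_of_isLeaf {v : T.V} (hv : T.IsLeaf v) : T.children v = ∅ := by
  have h := hv.1
  rw [degree, if_neg hv.2] at h
  exact card_eq_zero.1 (by omega)

lemma leavesBelow_leaf (l : T.Leaf) : T.leavesBelow l.1 = {l} := by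
  ext l'
  rw [mem_leavesBelow, mem_singleton]
  refine ⟨fun h => ?_, fun h => h ▸ .refl _⟩
  by_contra hne
  obtain ⟨c, hc, hcl, -⟩ := h.exists_child fun h' => hne (Subtype.ext h')
  have : c ∈ T.children l.1 := by simp [children, hc, hcl]
  simp [T.children_eq_empty_of_isLeaf l.2] at this

lemma leavesBelow_eq_biUnion {v : T.V} (hv : ¬ T.IsLeaf v) :
    T.leavesBelow v = (T.childEdges v).biUnion fun e => T.leavesBelow e.1 := by
  ext l
  simp only [mem_leavesBelow, mem_biUnion]
  refine ⟨fun h => ?_, fun ⟨e, he, hl⟩ => hl.trans (strictBelow_of_mem_childEdges he).1⟩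
  obtain ⟨c, hc, hcv, hl⟩ := h.exists_child fun h' => hv (h' ▸ l.2)
  have hc_root : c ≠ T.root := fun h0 => hcv (by rw [← hc, h0, T.parent_root])
  exact ⟨⟨c, hc_root⟩, mem_childEdges.2 ⟨hc, hcv⟩, hl⟩

lemma pairwiseDisjoint_leavesBelow (v : T.V) :
    (T.childEdges v : Set T.Edge).PairwiseDisjoint fun e => T.leavesBelow e.1 := by
  intro e₁ he₁ e₂ he₂ hne
  rw [Function.onFun, disjoint_left]
  intro l hl₁ hl₂
  obtain ⟨hp₁, hv₁⟩ := mem_childEdges.1 he₁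
  obtain ⟨hp₂, hv₂⟩ := mem_childEdges.1 he₂
  refine hne (Subtype.ext ?_)
  rcases (mem_leavesBelow.1 hl₁).total (mem_leavesBelow.1 hl₂) with h | h
  · exact h.eq_of_parent_eq (hp₁.trans hp₂.symm) (hp₂.symm ▸ hv₂)
  · exact (h.eq_of_parent_eq (hp₂.trans hp₁.symm) (hp₁.symm ▸ hv₁)).symm

section Flows

variable {G : Type} [AddCommGroup G]

lemma sum_leavesBelow_of_not_isLeaf (s : T.Leaf → G) {v : T.V} (hv : ¬ T.IsLeaf v) :
    ∑ l ∈ T.leavesBelow v, s l = ∑ e ∈ T.childEdges v, ∑ l ∈ T.leavesBelow e.1, s l := by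
  rw [T.leavesBelow_eq_biUnion hv, sum_biUnion (T.pairwiseDisjoint_leavesBelow v)]

lemma isFlow_iff (f : T.Edge → G) :
    T.IsFlow f ↔ ∑ e ∈ T.childEdges T.root, f e = 0 ∧
      ∀ e : T.Edge, ¬ T.IsLeaf e.1 → f e = ∑ e' ∈ T.childEdges e.1, f e' := by
  have hroot (e : T.Edge) : (T.parent e.1 = T.root ∧ e.1 ≠ T.root) ↔ T.parent e.1 = T.root :=
    and_iff_left e.2
  simp only [IsFlow, childEdges, sum_filter, hroot]

noncomputable def ofSocket (s : T.Leaf → G) (e : T.Edge) : G :=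
  ∑ l ∈ T.leavesBelow e.1, s l

lemma leafRes_ofSocket (s : T.Leaf → G) : T.leafRes (T.ofSocket s) = s := by
  funext l
  simp only [leafRes, ofSocket, leafEdge, leavesBelow_leaf, sum_singleton]

lemma sum_childEdges_root_ofSocket (s : T.Leaf → G) :
    ∑ e ∈ T.childEdges T.root, T.ofSocket s e = ∑ l, s l := by
  calc ∑ e ∈ T.childEdges T.root, T.ofSocket s e = ∑ l ∈ T.leavesBelow T.root, s l :=
        (T.sum_leavesBelow_of_not_isLeaf s fun h => h.2 rfl).symm
    _ = ∑ l, s l := by rw [leavesBelow_root]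

lemma isFlow_ofSocket {s : T.Leaf → G} (hs : ∑ l, s l = 0) : T.IsFlow (T.ofSocket s) :=
  (T.isFlow_iff _).2
    ⟨by rw [sum_childEdges_root_ofSocket, hs], fun _ he => sum_leavesBelow_of_not_isLeaf _ _ he⟩

variable {T}

lemma IsFlow.apply_eq_ofSocket_leafRes {f : T.Edge → G} (hf : T.IsFlow f) (e : T.Edge) :
    f e = T.ofSocket (T.leafRes f) e := by
  induction e using (InvImage.wf (fun e : T.Edge => e.1) T.wellFounded_strictBelow).induction with
  | _ e ih =>
    by_cases hl : T.IsLeaf e.1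
    · exact (congrFun (T.leafRes_ofSocket (T.leafRes f)) ⟨e.1, hl⟩).symm
    · rw [((T.isFlow_iff f).1 hf).2 e hl, ofSocket, sum_leavesBelow_of_not_isLeaf _ _ hl]
      exact sum_congr rfl fun e' he' => ih e' (strictBelow_of_mem_childEdges he')

lemma IsFlow.sum_leafRes {f : T.Edge → G} (hf : T.IsFlow f) : ∑ l, T.leafRes f l = 0 := by
  rw [← sum_childEdges_root_ofSocket, ← ((T.isFlow_iff f).1 hf).1]
  exact sum_congr rfl fun e _ => (hf.apply_eq_ofSocket_leafRes e).symm

end Flows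

end PhyloTree

theorem flow_socket_bijection_general (G : Type) [AddCommGroup G]
    (T : PhyloTree) :
    (∀ f : T.Edge → G, T.IsFlow f → ∑ l : T.Leaf, T.leafRes f l = 0) ∧
    Set.BijOn (T.leafRes (G := G)) {f : T.Edge → G | T.IsFlow f}
      {s : T.Leaf → G | ∑ l : T.Leaf, s l = 0} := by
  have maps : Set.MapsTo (T.leafRes (G := G)) {f | T.IsFlow f} {s | ∑ l, s l = 0} :=
    fun _ hf => PhyloTree.IsFlow.sum_leafRes hf
  refine ⟨maps, Set.InvOn.bijOn ⟨?_, ?_⟩ maps fun _ hs => T.isFlow_ofSocket hs⟩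
  · exact fun f hf => funext fun e => (PhyloTree.IsFlow.apply_eq_ofSocket_leafRes hf e).symm
  · exact fun s _ => T.leafRes_ofSocket s

/-- For every finite abelian group `G` and every finite tree `T` rooted at a
non-leaf vertex, the map sending a flow `f` to the function `l ↦ f (parent edge
of l)` on leaves takes values in the set of sockets (functions on leaves whose
values sum to `0`), and it is a bijection between the set of flows and the set
of sockets. -/
theorem flow_socket_bijection (G : Type) [AddCommGroup G] [Fintype G]
    (T : PhyloTree) (hroot : T.degree T.root ≠ 1) :
    (∀ f : T.Edge → G, T.IsFlow f → ∑ l : T.Leaf, T.leafRes f l = 0) ∧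
    Set.BijOn (T.leafRes (G := G)) {f : T.Edge → G | T.IsFlow f}
      {s : T.Leaf → G | ∑ l : T.Leaf, s l = 0} :=
  flow_socket_bijection_general G T
end

section
/- Let n > 3 and let a1, a2 : Fin n → Fin 2 → ZMod 2 be such that every column of each matrix sums to zero (i.e. for each c ∈ Fin 2, ∑_i a1 i c = 0 and ∑_i a2 i c = 0) and for every row i the multiset {a1 i 0, a1 i 1} equals the multiset {a2 i 0, a2 i 1}. Then there exists a subset S ⊆ Fin n with 2 ≤ |S| and 2 ≤ |Fin n \ S| such that the multiset {∑_{i∈S} a1 i 0, ∑_{i∈S} a1 i 1} equals the multiset {∑_{i∈S} a2 i 0, ∑_{i∈S} a2 i 1}. -/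
/-- Let `n > 3` and let `a1 a2 : Fin n → Fin 2 → ZMod 2` be matrices (rows indexed by
`Fin n`, two columns) such that every column of each matrix sums to zero and, for every
row `i`, the multiset of entries of the `i`-th row of `a1` equals that of `a2`.
Then there is a subset `S ⊆ Fin n` with `2 ≤ |S|` and `2 ≤ |Fin n \ S|` such that the
multiset of the two column sums of `a1` over `S` equals that of `a2` over `S`. -/
theorem binary_jukes_cantor_prolongation (n : ℕ) (hn : 3 < n)
    (a1 a2 : Fin n → Fin 2 → ZMod 2)
    (h1 : ∀ c : Fin 2, ∑ i : Fin n, a1 i c = 0)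
    (h2 : ∀ c : Fin 2, ∑ i : Fin n, a2 i c = 0)
    (hrow : ∀ i : Fin n, ({a1 i 0, a1 i 1} : Multiset (ZMod 2)) = {a2 i 0, a2 i 1}) :
    ∃ S : Finset (Fin n), 2 ≤ S.card ∧ 2 ≤ Sᶜ.card ∧
      ({∑ i ∈ S, a1 i 0, ∑ i ∈ S, a1 i 1} : Multiset (ZMod 2))
        = {∑ i ∈ S, a2 i 0, ∑ i ∈ S, a2 i 1} := by
  classical
  have key : ∀ i, (a1 i 0 = a2 i 0 ∧ a1 i 1 = a2 i 1) ∨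
      (a1 i 0 = a2 i 0 + 1 ∧ a1 i 1 = a2 i 1 + 1) := by
    intro i
    have h := hrow i
    revert h
    generalize a1 i 0 = x; generalize a1 i 1 = y
    generalize a2 i 0 = u; generalize a2 i 1 = v
    revert x y u v
    decide
  set T := Finset.univ.filter (fun i : Fin n => a1 i 0 ≠ a2 i 0) with hT
  have hmemT : ∀ i : Fin n, i ∈ T ↔ a1 i 0 ≠ a2 i 0 := by
    intro i; simp [hT]
  have add_self : ∀ x : ZMod 2, x + 1 ≠ x := by decide
  have two : (2 : ZMod 2) = 0 := by decide
  have step : ∀ i j : Fin n, ((i ∈ T) ↔ (j ∈ T)) →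
      (a1 i 0 + a1 j 0 = a2 i 0 + a2 j 0) ∧ (a1 i 1 + a1 j 1 = a2 i 1 + a2 j 1) := by
    intro i j hij
    rw [hmemT i, hmemT j] at hij
    rcases key i with ⟨e1, e2⟩ | ⟨e1, e2⟩ <;> rcases key j with ⟨f1, f2⟩ | ⟨f1, f2⟩ <;>
      first
        | (exfalso; revert hij; simp [e1, f1, add_self]; done)
        | (refine ⟨?_, ?_⟩ <;> simp only [e1, e2, f1, f2] <;>
             first
               | rfl
               | linear_combination two)
  have main : ∀ i j : Fin n, i ≠ j → ((i ∈ T) ↔ (j ∈ T)) →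
      ∃ S : Finset (Fin n), 2 ≤ S.card ∧ 2 ≤ Sᶜ.card ∧
        ({∑ i ∈ S, a1 i 0, ∑ i ∈ S, a1 i 1} : Multiset (ZMod 2))
          = {∑ i ∈ S, a2 i 0, ∑ i ∈ S, a2 i 1} := by
    intro i j hij hmem
    refine ⟨{i, j}, ?_, ?_, ?_⟩
    · rw [Finset.card_pair hij]
    · have h1 : ({i, j} : Finset (Fin n)).card = 2 := Finset.card_pair hij
      have h2 := Finset.card_compl ({i, j} : Finset (Fin n))
      rw [h1, Fintype.card_fin] at h2
      omega
    · rw [Finset.sum_pair hij, Finset.sum_pair hij, Finset.sum_pair hij, Finset.sum_pair hij,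
        (step i j hmem).1, (step i j hmem).2]
  rcases Nat.lt_or_ge T.card 2 with hTc | hTc
  · have hc : 2 ≤ Tᶜ.card := by
      have := Finset.card_add_card_compl T
      rw [Fintype.card_fin] at this
      omega
    obtain ⟨i, hi, j, hj, hij⟩ := Finset.one_lt_card.mp hc
    rw [Finset.mem_compl] at hi hj
    exact main i j hij (by simp [hi, hj])
  · obtain ⟨i, hi, j, hj, hij⟩ := Finset.one_lt_card.mp hTc
    exact main i j hij (by simp [hi, hj])
end

section
/- Let n > 3 and G = ZMod 2. Then ker φ_{n,G} equals the ideal sum, over all subsets A ⊆ Fin n with 2 ≤ |A| and 2 ≤ |Fin n \ A|, of the ideals ker φ_A. (Geometrically: the variety of the claw tree K_{n,1} for the binary Jukes-Cantor model is the scheme-theoretic intersection of the varieties of all its prolongations with two inner vertices, both of valency at least three.) -/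
/-- A socket of the claw tree `K_{n,1}`: a function `g : Fin n → G` whose values sum
to zero. -/
def Socket (n : ℕ) (G : Type) [AddCommGroup G] : Type :=
  {g : Fin n → G // ∑ i : Fin n, g i = 0}

/-- The monomial map of the claw tree `K_{n,1}`: the `ℚ`-algebra homomorphism from the
polynomial ring with one variable `x_g` for each socket `g`, sending
`x_g ↦ ∏ i, y_(i, g i)`.  Its kernel is the toric ideal of `K_{n,1}` for `G`. -/
noncomputable def clawMap (n : ℕ) (G : Type) [AddCommGroup G] :
    MvPolynomial (Socket n G) ℚ →ₐ[ℚ] MvPolynomial (Fin n × G) ℚ :=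
  MvPolynomial.aeval fun g : Socket n G => ∏ i : Fin n, MvPolynomial.X (i, g.1 i)

/-- The monomial map of the prolongation of the claw tree determined by a subset
`A ⊆ Fin n`: the `ℚ`-algebra homomorphism sending
`x_g ↦ (∏ i, y_(i, g i)) * z_(∑ i ∈ A, g i)`; here the variable `z_h` (for `h ∈ G`)
corresponds to the new inner edge.  Its kernel is the toric ideal of the prolongation
tree `T_A`. -/
noncomputable def prolongMap (n : ℕ) (G : Type) [AddCommGroup G] (A : Finset (Fin n)) :
    MvPolynomial (Socket n G) ℚ →ₐ[ℚ] MvPolynomial ((Fin n × G) ⊕ G) ℚ :=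
  MvPolynomial.aeval fun g : Socket n G =>
    (∏ i : Fin n, MvPolynomial.X (Sum.inl (i, g.1 i)))
      * MvPolynomial.X (Sum.inr (∑ i ∈ A, g.1 i))

/-!
Setting the inner-edge variables `z_h` to `1` turns every prolongation map into the claw map, so
each `ker φ_A` lies in the claw ideal. Conversely, the claw ideal is spanned by the binomials
`x^M - x^N` for multisets `M`, `N` of sockets with the same column statistics, and the binomial
`x_g x_p - x_g' x_p'` of the exchange of the coordinates in `T = {i, j}` between two sockets lies in
`ker φ_T`, where `|T| = 2` and `|Tᶜ| = n - 2 ≥ 2`. So it suffices that over `ℤ/2` any two such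
multisets are linked by pair exchanges, modulo the ideal they generate.

Choose rows `g` of `M` and `h` of `N` at minimal Hamming distance `d` over all multisets linked to
`M` and `N`. If `d > 0` then `d ≥ 2`, since two sockets differ in an even number of places. Let
`W` be the set where `g` and `h` differ. No row of `M` differs from `g` (no row of `N` from `h`) at
two positions of `W`: exchanging them would shorten `d`. But the number of disagreements with `g` on `W`, summed over the rows, only depends on
the column statistics, and so does the same count for `h`; in every row the two counts add up to
`d`. Comparing `M` with `N` then gives `d (|M| + |N|) ≤ 2 (|M| + |N|) - 4`, which is absurd. Hence
some row is common to both sides, and one inducts on the number of rows.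
-/

open MvPolynomial Finset

theorem apply_eq_apply_of_mk_eq {A B F : Type*} [CommRing A] [Ring B] [FunLike F A B]
    [RingHomClass F A B] {f : F} {I : Ideal A} (hle : I ≤ RingHom.ker f) {x y : A}
    (h : Ideal.Quotient.mk I x = Ideal.Quotient.mk I y) : f x = f y := by
  rw [← sub_eq_zero, ← map_sub]
  exact hle (Ideal.Quotient.eq.mp h)

section MonomialMap

variable {R σ τ : Type*} [CommRing R] (w : σ → τ →₀ ℕ)

theorem monomial_one_eq_prod_toMultiset (u : σ →₀ ℕ) :
    monomial u (1 : R) = (u.toMultiset.map X).prod := by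
  induction u using Finsupp.induction with
  | zero => simp
  | single_add s k u _ _ ih =>
    rw [← mul_one (1 : R), ← monomial_mul, ih, Finsupp.toMultiset_add, Multiset.map_add,
      Multiset.prod_add, Finsupp.toMultiset_single, Multiset.map_nsmul, Multiset.prod_nsmul,
      Multiset.map_singleton, Multiset.prod_singleton, X_pow_eq_monomial]

theorem aeval_monomial_prod_X (M : Multiset σ) :
    aeval (fun s => monomial (w s) (1 : R)) (M.map (X (R := R))).prod =
      monomial (M.map w).sum 1 := by
  induction M using Multiset.induction with
  | empty => simp
  | cons s M ih =>
    rw [Multiset.map_cons, Multiset.prod_cons, map_mul, aeval_X, ih, Multiset.map_cons,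
      Multiset.sum_cons, monomial_mul, one_mul]

theorem ker_aeval_monomial_le {I : Ideal (MvPolynomial σ R)}
    (hI : ∀ M N : Multiset σ, aeval (fun s => monomial (w s) (1 : R)) (M.map (X (R := R))).prod =
      aeval (fun s => monomial (w s) (1 : R)) (N.map (X (R := R))).prod →
        (M.map (X (R := R))).prod - (N.map (X (R := R))).prod ∈ I) :
    RingHom.ker (aeval fun s => monomial (w s) (1 : R)) ≤ I := by
  classical
  set W : (σ →₀ ℕ) → τ →₀ ℕ := fun u => (u.toMultiset.map w).sum
  have hW (u : σ →₀ ℕ) (c : R) :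
      aeval (fun s => monomial (w s) (1 : R)) (monomial u c) = monomial (W u) c := by
    rw [← mul_one c, ← C_mul_monomial, map_mul, aeval_C, monomial_one_eq_prod_toMultiset,
      aeval_monomial_prod_X, algebraMap_eq, C_mul_monomial]
  -- Moving every exponent to a fixed representative `r u` of its fibre under `W` kills `p`,
  -- because it factors through the image of `p`; so `p` is a sum of binomials.
  set r : (σ →₀ ℕ) → σ →₀ ℕ := Function.invFun W ∘ W
  have hr (u : σ →₀ ℕ) : W (r u) = W u := Function.invFun_eq ⟨u, rfl⟩
  intro p hp
  have hrep : ∑ u ∈ p.support, monomial (r u) (coeff u p) = 0 := by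
    have := congrArg (AddMonoidAlgebra.mapDomainLinearMap R R (Function.invFun W))
      (RingHom.mem_ker.mp hp)
    rw [as_sum p, map_sum, map_sum] at this
    simp only [hW] at this
    simp only [← single_eq_monomial, AddMonoidAlgebra.mapDomainLinearMap_single, map_zero] at this
    exact this
  rw [as_sum p, ← sub_zero (∑ u ∈ p.support, _), ← hrep, ← sum_sub_distrib]
  refine Ideal.sum_mem _ fun u _ => ?_
  rw [← mul_one (coeff u p), ← C_mul_monomial, ← C_mul_monomial, ← mul_sub]
  refine I.mul_mem_left _ ?_
  rw [monomial_one_eq_prod_toMultiset, monomial_one_eq_prod_toMultiset]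
  apply hI
  rw [← monomial_one_eq_prod_toMultiset, ← monomial_one_eq_prod_toMultiset, hW, hW, hr]

end MonomialMap

section Claw

variable {n : ℕ} {G : Type} [AddCommGroup G]

noncomputable def clawWeight (g : Socket n G) : Fin n × G →₀ ℕ :=
  ∑ i, Finsupp.single (i, g.1 i) 1

theorem clawMap_eq_aeval_monomial :
    clawMap n G = aeval fun g => monomial (clawWeight g) (1 : ℚ) := by
  simp only [clawMap, clawWeight, monomial_sum_one]
  rfl

theorem clawWeight_apply [DecidableEq G] (g : Socket n G) (i : Fin n) (a : G) :
    clawWeight g (i, a) = if g.1 i = a then 1 else 0 := by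
  simp only [clawWeight, Finsupp.finsetSum_apply, Finsupp.single_apply, Prod.mk.injEq]
  rw [sum_eq_single i (fun j _ hj => by simp [hj]) (by simp)]
  simp

theorem degree_clawWeight (g : Socket n G) : (clawWeight g).degree = n := by
  simp [clawWeight]

theorem clawMap_prod_X (M : Multiset (Socket n G)) :
    clawMap n G (M.map (X (R := ℚ))).prod = monomial (M.map clawWeight).sum 1 := by
  rw [clawMap_eq_aeval_monomial, aeval_monomial_prod_X]

theorem clawMap_X_ne_zero (g : Socket n G) : clawMap n G (X g) ≠ 0 := by
  rw [clawMap_eq_aeval_monomial, aeval_X]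
  exact monomial_eq_zero.not.mpr one_ne_zero

theorem sum_clawWeight_eq_of_clawMap_eq {M N : Multiset (Socket n G)}
    (h : clawMap n G (M.map (X (R := ℚ))).prod = clawMap n G (N.map (X (R := ℚ))).prod) :
    (M.map clawWeight).sum = (N.map clawWeight).sum :=
  monomial_left_injective one_ne_zero (by rwa [clawMap_prod_X, clawMap_prod_X] at h)

theorem card_eq_of_clawMap_eq (hn : 0 < n) {M N : Multiset (Socket n G)}
    (h : clawMap n G (M.map (X (R := ℚ))).prod = clawMap n G (N.map (X (R := ℚ))).prod) :
    M.card = N.card := by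
  have hdeg (M : Multiset (Socket n G)) : (M.map clawWeight).sum.degree = M.card * n := by
    simp [map_multiset_sum, degree_clawWeight]
  have := congrArg Finsupp.degree (sum_clawWeight_eq_of_clawMap_eq h)
  rw [hdeg, hdeg] at this
  exact Nat.eq_of_mul_eq_mul_right hn this

def Socket.exchange (S : Finset (Fin n)) (g p : Socket n G)
    (h : ∑ i ∈ S, g.1 i = ∑ i ∈ S, p.1 i) : Socket n G :=
  ⟨S.piecewise p.1 g.1, by
    rw [sum_piecewise, univ_inter, ← h, add_comm, sum_sdiff (subset_univ S), g.2]⟩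

theorem X_mul_X_sub_exchange_mem_ker_prolongMap (S : Finset (Fin n)) (g p : Socket n G)
    (h : ∑ i ∈ S, g.1 i = ∑ i ∈ S, p.1 i) :
    X g * X p - X (g.exchange S p h) * X (p.exchange S g h.symm) ∈
      RingHom.ker (prolongMap n G S) := by
  have hy (i : Fin n) : (X (Sum.inl (i, (g.exchange S p h).1 i)) *
        X (Sum.inl (i, (p.exchange S g h.symm).1 i)) : MvPolynomial ((Fin n × G) ⊕ G) ℚ) =
      X (Sum.inl (i, g.1 i)) * X (Sum.inl (i, p.1 i)) := by
    by_cases hi : i ∈ S <;> simp [Socket.exchange, hi, mul_comm]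
  have hz (g p : Socket n G) h : ∑ i ∈ S, (g.exchange S p h).1 i = ∑ i ∈ S, p.1 i :=
    sum_congr rfl fun i hi => piecewise_eq_of_mem _ _ _ hi
  rw [RingHom.mem_ker, map_sub, sub_eq_zero]
  simp only [prolongMap, map_mul, aeval_X]
  conv_rhs => rw [hz, hz, mul_mul_mul_comm, ← prod_mul_distrib,
    prod_congr rfl fun i _ => hy i, prod_mul_distrib]
  ring

theorem ker_prolongMap_le_ker_clawMap (A : Finset (Fin n)) :
    RingHom.ker (prolongMap n G A) ≤ RingHom.ker (clawMap n G) := by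
  have hcomp : (aeval (Sum.elim X 1)).comp (prolongMap n G A) = clawMap n G := by
    apply algHom_ext
    intro g
    simp [prolongMap, clawMap]
  intro p hp
  rw [RingHom.mem_ker] at hp ⊢
  rw [← hcomp, AlgHom.comp_apply, hp, map_zero]

end Claw

theorem hammingDist_piecewise_add_card {ι β : Type*} [Fintype ι] [DecidableEq ι] [DecidableEq β]
    {x y z : ι → β} {T : Finset ι} (hT : ∀ i ∈ T, y i = z i ∧ x i ≠ z i) :
    hammingDist (T.piecewise y x) z + #T = hammingDist x z := by
  have hset : univ.filter (fun i => T.piecewise y x i ≠ z i) =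
      univ.filter (fun i => x i ≠ z i) \ T := by
    ext i
    by_cases hi : i ∈ T <;> simp [hi, hT]
  rw [hammingDist, hset, card_sdiff_add_card_eq_card fun i hi => by simp [(hT i hi).2]]
  rfl

section HammingZModTwo

variable {ι : Type*}

theorem zmod_two_eq_of_ne_of_ne {a b c : ZMod 2} (hb : a ≠ b) (hc : a ≠ c) : b = c := by
  revert a b c; decide

theorem natCast_hammingDist_zmod_two [Fintype ι] (x y : ι → ZMod 2) :
    (hammingDist x y : ZMod 2) = ∑ i, x i - ∑ i, y i := by
  have hxy (a b : ZMod 2) : a - b = if a ≠ b then 1 else 0 := by revert a b; decide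
  rw [hammingDist, natCast_card_filter, ← sum_sub_distrib]
  exact sum_congr rfl fun i _ => (hxy _ _).symm

theorem sum_eq_sum_add_card_of_forall_ne {x y : ι → ZMod 2} {T : Finset ι}
    (h : ∀ i ∈ T, x i ≠ y i) : ∑ i ∈ T, x i = ∑ i ∈ T, y i + #T := by
  have hxy (a b : ZMod 2) (hab : a ≠ b) : a = b + 1 := by revert a b; decide
  rw [sum_congr rfl fun i hi => hxy _ _ (h i hi), sum_add_distrib, sum_const, nsmul_one]

theorem card_filter_ne_add_card_filter_ne [Fintype ι] (x z r : ι → ZMod 2) :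
    #{i | x i ≠ z i ∧ x i ≠ r i} + #{i | x i ≠ z i ∧ z i ≠ r i} = hammingDist x z := by
  rw [hammingDist, ← card_filter_add_card_filter_not (s := univ.filter fun i => x i ≠ z i)
    (fun i => x i ≠ r i), filter_filter, filter_filter]
  have key (a b c : ZMod 2) : (a ≠ b ∧ b ≠ c ↔ a ≠ b ∧ ¬a ≠ c) := by revert a b c; decide
  simp_rw [key]

end HammingZModTwo

theorem Multiset.sum_map_add_one_le_card {α : Type*} [DecidableEq α] {M : Multiset α}
    {f : α → ℕ} {a : α} (ha : a ∈ M) (hfa : f a = 0) (hf : ∀ x ∈ M, f x ≤ 1) :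
    (M.map f).sum + 1 ≤ M.card := by
  rw [← Multiset.cons_erase ha, Multiset.map_cons, Multiset.sum_cons, hfa, zero_add,
    Multiset.card_cons, add_le_add_iff_right]
  have := Multiset.sum_le_card_nsmul ((M.erase a).map f) 1 (by
    simp only [Multiset.mem_map]
    rintro _ ⟨x, hx, rfl⟩
    exact hf x (Multiset.mem_of_mem_erase hx))
  simpa using this

section BinaryClaw

variable {n : ℕ}

theorem Socket.even_hammingDist (g h : Socket n (ZMod 2)) : Even (hammingDist g.1 h.1) := by
  rw [← ZMod.natCast_eq_zero_iff_even, natCast_hammingDist_zmod_two, g.2, h.2, sub_zero]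

theorem sum_map_card_filter_ne_eq_sum_clawWeight (g : Socket n (ZMod 2)) (W : Finset (Fin n))
    (M : Multiset (Socket n (ZMod 2))) :
    (M.map fun r => #{i ∈ W | g.1 i ≠ r.1 i}).sum =
      ∑ i ∈ W, (M.map clawWeight).sum (i, g.1 i + 1) := by
  have hrow (r : Socket n (ZMod 2)) :
      #{i ∈ W | g.1 i ≠ r.1 i} = ∑ i ∈ W, clawWeight r (i, g.1 i + 1) := by
    have key (a b : ZMod 2) : b = a + 1 ↔ a ≠ b := by revert a b; decide
    simp only [clawWeight_apply, key, card_filter]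
  induction M using Multiset.induction with
  | empty => simp
  | cons r M ih =>
    rw [Multiset.map_cons, Multiset.sum_cons, ih, Multiset.map_cons, Multiset.sum_cons, hrow]
    simp only [Finsupp.add_apply, sum_add_distrib]

theorem exists_two_disagreements {M N : Multiset (Socket n (ZMod 2))}
    (hMN : (M.map clawWeight).sum = (N.map clawWeight).sum) {g h : Socket n (ZMod 2)}
    (hg : g ∈ M) (hh : h ∈ N) (hgh : 2 ≤ hammingDist g.1 h.1) :
    (∃ p ∈ M, 2 ≤ #{i | g.1 i ≠ h.1 i ∧ g.1 i ≠ p.1 i}) ∨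
      ∃ r ∈ N, 2 ≤ #{i | h.1 i ≠ g.1 i ∧ h.1 i ≠ r.1 i} := by
  classical
  by_contra! hcon
  obtain ⟨hM, hN⟩ := hcon
  set W : Finset (Fin n) := {i | g.1 i ≠ h.1 i}
  set a : Socket n (ZMod 2) → ℕ := fun r => #{i ∈ W | g.1 i ≠ r.1 i}
  set b : Socket n (ZMod 2) → ℕ := fun r => #{i ∈ W | h.1 i ≠ r.1 i}
  have hab (L : Multiset (Socket n (ZMod 2))) :
      (L.map a).sum + (L.map b).sum = L.card * hammingDist g.1 h.1 := by
    rw [← Multiset.sum_map_add]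
    simp [a, b, W, filter_filter, card_filter_ne_add_card_filter_ne]
  have hA : (M.map a).sum = (N.map a).sum := by
    simp only [a, sum_map_card_filter_ne_eq_sum_clawWeight, hMN]
  have hB : (M.map b).sum = (N.map b).sum := by
    simp only [b, sum_map_card_filter_ne_eq_sum_clawWeight, hMN]
  have hAM : (M.map a).sum + 1 ≤ M.card := Multiset.sum_map_add_one_le_card hg (by simp [a])
    fun p hp => by simpa [a, W, filter_filter] using Nat.lt_succ_iff.mp (hM p hp)
  have hBN : (N.map b).sum + 1 ≤ N.card := Multiset.sum_map_add_one_le_card hh (by simp [b])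
    fun r hr => by simpa [b, W, filter_filter, ne_comm] using Nat.lt_succ_iff.mp (hN r hr)
  have := hab M
  have := hab N
  nlinarith

end BinaryClaw
section PairExchanges

variable {n : ℕ}

def ContainsPairExchanges {G : Type} [AddCommGroup G] (I : Ideal (MvPolynomial (Socket n G) ℚ)) :
    Prop :=
  ∀ T : Finset (Fin n), #T = 2 → ∀ (g p : Socket n G) (h : ∑ i ∈ T, g.1 i = ∑ i ∈ T, p.1 i),
    X g * X p - X (g.exchange T p h) * X (p.exchange T g h.symm) ∈ I

variable {I : Ideal (MvPolynomial (Socket n (ZMod 2)) ℚ)}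

theorem exists_mk_eq_hammingDist_lt (hI : ContainsPairExchanges I)
    {M : Multiset (Socket n (ZMod 2))} {g p h : Socket n (ZMod 2)} (hg : g ∈ M) (hp : p ∈ M)
    (hgp : 2 ≤ #{i | g.1 i ≠ h.1 i ∧ g.1 i ≠ p.1 i}) :
    ∃ M' : Multiset (Socket n (ZMod 2)),
      Ideal.Quotient.mk I (M'.map X).prod = Ideal.Quotient.mk I (M.map X).prod ∧
        ∃ g' ∈ M', hammingDist g'.1 h.1 < hammingDist g.1 h.1 := by
  classical
  obtain ⟨T, hTsub, hT⟩ := exists_subset_card_eq hgp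
  have hTgh (i) (hi : i ∈ T) : g.1 i ≠ h.1 i := (mem_filter.mp (hTsub hi)).2.1
  have hTgp (i) (hi : i ∈ T) : g.1 i ≠ p.1 i := (mem_filter.mp (hTsub hi)).2.2
  have hsum : ∑ i ∈ T, g.1 i = ∑ i ∈ T, p.1 i := by
    rw [sum_eq_sum_add_card_of_forall_ne hTgp, hT, ZMod.natCast_self, add_zero]
  obtain ⟨i, hi⟩ : T.Nonempty := card_pos.mp (by omega)
  have hpM : p ∈ M.erase g :=
    Multiset.mem_erase_of_ne (fun hpg => hTgp i hi (by rw [hpg])) |>.mpr hp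
  refine ⟨g.exchange T p hsum ::ₘ p.exchange T g hsum.symm ::ₘ (M.erase g).erase p, ?_,
    _, Multiset.mem_cons_self _ _, ?_⟩
  · have hswap := (Ideal.Quotient.eq.mpr (hI T hT g p hsum)).symm
    conv_rhs => rw [← Multiset.cons_erase hg, ← Multiset.cons_erase hpM]
    simp only [Multiset.map_cons, Multiset.prod_cons, ← mul_assoc, map_mul] at hswap ⊢
    rw [hswap]
  · have := hammingDist_piecewise_add_card (x := g.1) (y := p.1) (z := h.1) (T := T)
      fun i hi => ⟨zmod_two_eq_of_ne_of_ne (hTgp i hi) (hTgh i hi), hTgh i hi⟩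
    change hammingDist (T.piecewise p.1 g.1) h.1 < _
    omega

theorem exists_common_mem_of_clawMap_eq (hle : I ≤ RingHom.ker (clawMap n (ZMod 2)))
    (hI : ContainsPairExchanges I) {M N : Multiset (Socket n (ZMod 2))}
    (hMN : clawMap n (ZMod 2) (M.map X).prod = clawMap n (ZMod 2) (N.map X).prod)
    {g h : Socket n (ZMod 2)} (hg : g ∈ M) (hh : h ∈ N) :
    ∃ (M' N' : Multiset (Socket n (ZMod 2))) (k : Socket n (ZMod 2)),
      Ideal.Quotient.mk I (M'.map X).prod = Ideal.Quotient.mk I (M.map X).prod ∧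
      Ideal.Quotient.mk I (N'.map X).prod = Ideal.Quotient.mk I (N.map X).prod ∧
      k ∈ M' ∧ k ∈ N' := by
  classical
  have hd : ∃ d, ∃ (M' N' : Multiset (Socket n (ZMod 2))) (g h : Socket n (ZMod 2)),
      Ideal.Quotient.mk I (M'.map X).prod = Ideal.Quotient.mk I (M.map X).prod ∧
      Ideal.Quotient.mk I (N'.map X).prod = Ideal.Quotient.mk I (N.map X).prod ∧
      g ∈ M' ∧ h ∈ N' ∧ hammingDist g.1 h.1 = d :=
    ⟨_, M, N, g, h, rfl, rfl, hg, hh, rfl⟩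
  obtain ⟨M', N', g, h, hM', hN', hg, hh, hgh⟩ := Nat.find_spec hd
  have hmin := fun d hd' => Nat.find_min' hd (m := d) hd'
  by_cases h0 : hammingDist g.1 h.1 = 0
  · exact ⟨M', N', g, hM', hN', hg, Subtype.ext (hammingDist_eq_zero.mp h0) ▸ hh⟩
  have h2 : 2 ≤ hammingDist g.1 h.1 := by
    obtain ⟨c, hc⟩ := g.even_hammingDist h
    omega
  have hw : (M'.map clawWeight).sum = (N'.map clawWeight).sum :=
    sum_clawWeight_eq_of_clawMap_eq <| by
      rw [apply_eq_apply_of_mk_eq hle hM', hMN, apply_eq_apply_of_mk_eq hle hN']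
  rcases exists_two_disagreements hw hg hh h2 with ⟨p, hp, hgp⟩ | ⟨r, hr, hhr⟩
  · obtain ⟨M'', hM'', g', hg', hlt⟩ := exists_mk_eq_hammingDist_lt hI hg hp hgp
    have := hmin _ ⟨M'', N', g', h, hM''.trans hM', hN', hg', hh, rfl⟩
    omega
  · obtain ⟨N'', hN'', h', hh', hlt⟩ := exists_mk_eq_hammingDist_lt hI hh hr hhr
    have := hmin _ ⟨M', N'', g, h', hM', hN''.trans hN', hg, hh', rfl⟩
    rw [hammingDist_comm h'.1, hammingDist_comm h.1] at hlt
    omega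

theorem mk_prod_X_eq_of_clawMap_eq (hn : 0 < n) (hle : I ≤ RingHom.ker (clawMap n (ZMod 2)))
    (hI : ContainsPairExchanges I) {M N : Multiset (Socket n (ZMod 2))}
    (hMN : clawMap n (ZMod 2) (M.map X).prod = clawMap n (ZMod 2) (N.map X).prod) :
    Ideal.Quotient.mk I (M.map X).prod = Ideal.Quotient.mk I (N.map X).prod := by
  classical
  induction hcard : M.card using Nat.strong_induction_on generalizing M N with
  | _ m ih =>
    rcases Multiset.empty_or_exists_mem M with rfl | ⟨g, hg⟩
    · rw [Multiset.card_eq_zero.mp (card_eq_of_clawMap_eq hn hMN).symm]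
    obtain ⟨h, hh⟩ := Multiset.card_pos_iff_exists_mem.mp
      ((card_eq_of_clawMap_eq hn hMN) ▸ Multiset.card_pos_iff_exists_mem.mpr ⟨g, hg⟩)
    obtain ⟨M', N', k, hM', hN', hkM, hkN⟩ := exists_common_mem_of_clawMap_eq hle hI hMN hg hh
    have hM'N' : clawMap n (ZMod 2) (M'.map X).prod = clawMap n (ZMod 2) (N'.map X).prod := by
      rw [apply_eq_apply_of_mk_eq hle hM', hMN, apply_eq_apply_of_mk_eq hle hN']
    have hlt : (M'.erase k).card < m :=
      hcard ▸ card_eq_of_clawMap_eq hn (apply_eq_apply_of_mk_eq hle hM') ▸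
        Multiset.card_erase_lt_of_mem hkM
    rw [← Multiset.prod_map_erase hkM, ← Multiset.prod_map_erase hkN, map_mul, map_mul] at hM'N'
    rw [← hM', ← hN', ← Multiset.prod_map_erase hkM, ← Multiset.prod_map_erase hkN, map_mul, map_mul,
      ih _ hlt (mul_left_cancel₀ (clawMap_X_ne_zero k) hM'N') rfl]

theorem ker_clawMap_le (hn : 0 < n) (hle : I ≤ RingHom.ker (clawMap n (ZMod 2)))
    (hI : ContainsPairExchanges I) : RingHom.ker (clawMap n (ZMod 2)) ≤ I := by
  rw [clawMap_eq_aeval_monomial]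
  refine ker_aeval_monomial_le _ fun M N hMN =>
    Ideal.Quotient.eq.mp (mk_prod_X_eq_of_clawMap_eq hn hle hI ?_)
  rwa [clawMap_eq_aeval_monomial]

end PairExchanges

/-- For `n > 3` and `G = ZMod 2` (the binary Jukes–Cantor model), the toric ideal of
the claw tree `K_{n,1}` is the ideal sum, over all subsets `A ⊆ Fin n` with `2 ≤ |A|`
and `2 ≤ |Aᶜ|`, of the toric ideals of the prolongations `T_A`.  Geometrically, the
variety of `K_{n,1}` is the scheme-theoretic intersection of the varieties of all its
prolongations with two inner vertices, both of valency at least three. -/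
theorem claw_ker_eq_sup_prolongation_ker (n : ℕ) (hn : 3 < n) :
    RingHom.ker (clawMap n (ZMod 2)) =
      ⨆ (A : Finset (Fin n)) (_ : 2 ≤ A.card ∧ 2 ≤ Aᶜ.card),
        RingHom.ker (prolongMap n (ZMod 2) A) := by
  have hle : (⨆ (A : Finset (Fin n)) (_ : 2 ≤ A.card ∧ 2 ≤ Aᶜ.card),
      RingHom.ker (prolongMap n (ZMod 2) A)) ≤ RingHom.ker (clawMap n (ZMod 2)) :=
    iSup₂_le fun A _ => ker_prolongMap_le_ker_clawMap A
  refine le_antisymm (ker_clawMap_le (by omega) hle fun T hT g p h => ?_) hle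
  have hTc : 2 ≤ Tᶜ.card := by rw [card_compl, Fintype.card_fin]; omega
  exact le_iSup₂ (f := fun (A : Finset (Fin n)) (_ : 2 ≤ A.card ∧ 2 ≤ Aᶜ.card) =>
    RingHom.ker (prolongMap n (ZMod 2) A)) T ⟨hT.ge, hTc⟩
    (X_mul_X_sub_exchange_mem_ker_prolongMap T g p h)
end

section
/- Let H be a finite abelian group and let a : Fin n → Fin m → H be a matrix such that every column sums to zero (for each c ∈ Fin m, ∑_i a i c = 0). Then there is a partition of Fin n into nonempty parts, each of cardinality at most |H|^m, such that for every part P of the partition and every column c ∈ Fin m, ∑_{i∈P} a i c = 0. -/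
/-!
View the rows of `a` as elements of the finite group `G = Fin m → H`, of order `|H|^m`.
Among the `|G| + 1` prefix sums of any `|G|` elements of `G` two coincide, so every family of
at least `|G|` elements has a nonempty zero-sum subfamily of size at most `|G|`. Peeling off
such blocks from a zero-sum family, and keeping the remainder whole once it has size at most
`|G|`, yields the partition.
-/

open Finset

section ZeroSum

variable {ι G : Type*} [AddCommGroup G] [Fintype G]

lemma exists_lt_sum_sdiff_eq_zero [DecidableEq ι] {P : ℕ → Finset ι} (hP : Monotone P)
    (v : ι → G) :
    ∃ j₁ j₂, j₁ < j₂ ∧ j₂ ≤ Fintype.card G ∧ ∑ i ∈ P j₂ \ P j₁, v i = 0 := by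
  have hcard : #(univ : Finset G) < #(range (Fintype.card G + 1)) := by simp
  obtain ⟨j₁, hj₁, j₂, hj₂, hne, hsum⟩ := exists_ne_map_eq_of_card_lt_of_maps_to hcard
    (f := fun j => ∑ i ∈ P j, v i) fun _ _ => mem_coe.2 (mem_univ _)
  wlog hlt : j₁ < j₂ generalizing j₁ j₂
  · exact this j₂ hj₂ j₁ hj₁ hne.symm hsum.symm (hne.lt_or_gt.resolve_left hlt)
  refine ⟨j₁, j₂, hlt, Nat.lt_succ_iff.1 (mem_range.1 hj₂), ?_⟩
  rw [sum_sdiff_eq_sub (hP hlt.le), ← hsum, sub_self]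

lemma exists_subset_nonempty_card_le_sum_eq_zero (v : ι → G) {s : Finset ι}
    (hs : Fintype.card G ≤ #s) :
    ∃ t ⊆ s, t.Nonempty ∧ #t ≤ Fintype.card G ∧ ∑ i ∈ t, v i = 0 := by
  classical
  set P : ℕ → Finset ι := fun j => (s.toList.take j).toFinset
  have hP_mono : Monotone P := fun j k hjk x hx => by
    simp only [P, List.mem_toFinset] at hx ⊢
    exact List.take_subset_take_left _ hjk hx
  have hP_card (j : ℕ) : #(P j) = min j #s := by
    rw [List.toFinset_card_of_nodup ((nodup_toList s).sublist (List.take_sublist _ _)),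
      List.length_take, length_toList]
  have hP_sub (j : ℕ) : P j ⊆ s := fun x hx =>
    mem_toList.1 (List.mem_of_mem_take (List.mem_toFinset.1 hx))
  obtain ⟨j₁, j₂, hlt, hj₂, hsum⟩ := exists_lt_sum_sdiff_eq_zero hP_mono v
  have hcard : #(P j₂ \ P j₁) = j₂ - j₁ := by
    rw [card_sdiff_of_subset (hP_mono hlt.le), hP_card, hP_card]
    omega
  refine ⟨P j₂ \ P j₁, sdiff_subset.trans (hP_sub j₂), card_pos.1 (by omega), by omega, hsum⟩

lemma exists_finpartition_card_le_sum_eq_zero [DecidableEq ι] (v : ι → G) (s : Finset ι)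
    (hs : ∑ i ∈ s, v i = 0) :
    ∃ P : Finpartition s, ∀ p ∈ P.parts, #p ≤ Fintype.card G ∧ ∑ i ∈ p, v i = 0 := by
  induction s using Finset.strongInduction with
  | _ s ih =>
  rcases s.eq_empty_or_nonempty with rfl | hne
  · exact ⟨Finpartition.empty _, by simp⟩
  obtain ⟨t, hts, ht, htcard, htsum⟩ :
      ∃ t ⊆ s, t.Nonempty ∧ #t ≤ Fintype.card G ∧ ∑ i ∈ t, v i = 0 := by
    by_cases hsG : #s ≤ Fintype.card G
    · exact ⟨s, subset_rfl, hne, hsG, hs⟩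
    · exact exists_subset_nonempty_card_le_sum_eq_zero v (not_le.1 hsG).le
  obtain ⟨Q, hQ⟩ := ih (s \ t) (sdiff_ssubset hts ht)
    (by rw [sum_sdiff_eq_sub hts, hs, htsum, sub_zero])
  refine ⟨Q.extend ht.ne_empty sdiff_disjoint (sdiff_union_of_subset hts), ?_⟩
  simp only [Finpartition.extend_parts, forall_mem_insert]
  exact ⟨⟨htcard, htsum⟩, hQ⟩

end ZeroSum

/-- Let `H` be a finite abelian group and `a : Fin n → Fin m → H` a matrix each of whose
columns sums to zero.  Then there is a partition of `Fin n` (encoded as a `Finpartition`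
of `Finset.univ`, whose parts are nonempty by definition) into parts of cardinality at
most `|H|^m` such that, for every part `P` and every column `c`, `∑ i ∈ P, a i c = 0`. -/
theorem subdivision_lemma (H : Type) [AddCommGroup H] [Fintype H] (n m : ℕ)
    (a : Fin n → Fin m → H) (h : ∀ c : Fin m, ∑ i : Fin n, a i c = 0) :
    ∃ P : Finpartition (Finset.univ : Finset (Fin n)),
      ∀ p ∈ P.parts, p.card ≤ Fintype.card H ^ m ∧ ∀ c : Fin m, ∑ i ∈ p, a i c = 0 := by
  have hrows : ∑ i, a i = 0 := funext fun c => by rw [Finset.sum_apply, h c, Pi.zero_apply]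
  obtain ⟨P, hP⟩ := exists_finpartition_card_le_sum_eq_zero a univ hrows
  refine ⟨P, fun p hp => ?_⟩
  obtain ⟨hcard, hsum⟩ := hP p hp
  refine ⟨by simpa [Fintype.card_fun] using hcard, fun c => ?_⟩
  rw [← Finset.sum_apply, hsum, Pi.zero_apply]
end

section
/- Let n > 8, let 1 ≤ k ≤ 4, and let a1, a2 : Fin n → Fin k → (ZMod 2 × ZMod 2) be matrices such that every column of each sums to zero (for each c, ∑_i a1 i c = 0 and ∑_i a2 i c = 0) and for every row i the multiset {a1 i c : c ∈ Fin k} equals the multiset {a2 i c : c ∈ Fin k}. Then there exists a subset S ⊆ Fin n with 2 ≤ |S| and 2 ≤ |Fin n \ S| such that the multiset {∑_{i∈S} a1 i c : c ∈ Fin k} equals the multiset {∑_{i∈S} a2 i c : c ∈ Fin k}. -/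
/-!
Put `d := a1 - a2`. Equal row multisets give equal row sums, so every row of `d` lies in the
subgroup of `(ZMod 2 × ZMod 2)ᵏ` of vectors with zero coordinate sum, which has
`4 ^ (k - 1) ≤ 64` elements. If two rows of `d` vanish they form `S`. Otherwise pick seven nonzero
rows: their `2 ^ 7` subset sums all lie in that subgroup, so two subsets have the same sum, and
in characteristic two their symmetric difference is a zero-sum set of rows; it has at least two
elements because the rows are nonzero, and at most seven, leaving at least two outside it.
Finally `∑ i ∈ S, d i = 0` says the column sums of `a1` and `a2` over `S` agree one by one.
-/

open Finset

lemma card_filter_sum_eq_zero_le {G : Type*} [AddCommGroup G] [Fintype G] [DecidableEq G]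
    (k : ℕ) : #{f : Fin k → G | ∑ c, f c = 0} ≤ Fintype.card G ^ (k - 1) := by
  cases k with
  | zero => simp
  | succ m =>
    have hinj : Set.InjOn (fun f : Fin (m + 1) → G => f ∘ Fin.castSucc)
        {f | ∑ c, f c = 0} := by
      intro f hf g hg hfg
      simp only [Set.mem_ofPred_eq, Fin.sum_univ_castSucc] at hf hg
      have hinit : ∀ c : Fin m, f c.castSucc = g c.castSucc := fun c => congrFun hfg c
      have hlast : f (Fin.last m) = g (Fin.last m) := by
        rw [eq_neg_of_add_eq_zero_right hf, eq_neg_of_add_eq_zero_right hg,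
          Fintype.sum_congr _ _ hinit]
      exact funext (Fin.lastCases hlast hinit)
    calc #{f : Fin (m + 1) → G | ∑ c, f c = 0}
        ≤ #(univ : Finset (Fin m → G)) :=
          card_le_card_of_injOn _ (fun _ _ => mem_coe.2 (mem_univ _)) (by simpa using hinj)
      _ = Fintype.card G ^ (m + 1 - 1) := by simp

namespace ZModModule

variable {ι M : Type*} [DecidableEq ι] [AddCommGroup M] [Module (ZMod 2) M]

lemma sum_symmDiff (v : ι → M) (A B : Finset ι) :
    ∑ i ∈ symmDiff A B, v i = ∑ i ∈ A, v i + ∑ i ∈ B, v i := by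
  rw [symmDiff_eq_sup_sdiff_inf, sup_eq_union, inf_eq_inter, ← sum_union_inter,
    ← sum_sdiff inter_subset_union, add_assoc, add_self, add_zero]

lemma exists_nonempty_subset_sum_eq_zero (v : ι → M) {T : Finset ι} {V : Finset M}
    (hV : ∀ A ⊆ T, ∑ i ∈ A, v i ∈ V) (hcard : #V < 2 ^ #T) :
    ∃ S ⊆ T, S.Nonempty ∧ ∑ i ∈ S, v i = 0 := by
  rw [← card_powerset] at hcard
  obtain ⟨A, hA, B, hB, hAB, hsum⟩ := exists_ne_map_eq_of_card_lt_of_maps_to hcard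
    (f := fun A => ∑ i ∈ A, v i) fun A hA => hV A (mem_powerset.1 hA)
  rw [mem_powerset] at hA hB
  refine ⟨symmDiff A B, symmDiff_subset_union.trans (union_subset hA hB),
    symmDiff_nonempty.2 hAB, ?_⟩
  rw [sum_symmDiff, show ∑ i ∈ A, v i = ∑ i ∈ B, v i from hsum, add_self]

lemma exists_two_le_card_subset_sum_eq_zero (v : ι → M) {T : Finset ι} {V : Finset M}
    (hT : ∀ i ∈ T, v i ≠ 0) (hV : ∀ A ⊆ T, ∑ i ∈ A, v i ∈ V) (hcard : #V < 2 ^ #T) :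
    ∃ S ⊆ T, 2 ≤ #S ∧ ∑ i ∈ S, v i = 0 := by
  obtain ⟨S, hST, hS, hsum⟩ := exists_nonempty_subset_sum_eq_zero v hV hcard
  refine ⟨S, hST, ?_, hsum⟩
  obtain ⟨i, rfl⟩ | hS := hS.exists_eq_singleton_or_nontrivial
  · rw [sum_singleton] at hsum
    exact absurd hsum (hT i (hST (mem_singleton_self i)))
  · exact one_lt_card_iff_nontrivial.2 hS

end ZModModule

theorem exists_two_le_card_compl_sum_eq_zero {ι G : Type*} [Fintype ι] [DecidableEq ι]
    [AddCommGroup G] [Module (ZMod 2) G] [Fintype G] [DecidableEq G] {k : ℕ}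
    (hι : 4 ≤ Fintype.card ι) (hG : Fintype.card G ^ (k - 1) < 2 ^ (Fintype.card ι - 2))
    (v : ι → Fin k → G) (hv : ∀ i, ∑ c, v i c = 0) :
    ∃ S : Finset ι, 2 ≤ #S ∧ 2 ≤ #Sᶜ ∧ ∑ i ∈ S, v i = 0 := by
  by_cases hzero : ∃ i j, i ≠ j ∧ v i = 0 ∧ v j = 0
  · obtain ⟨i, j, hij, hi, hj⟩ := hzero
    refine ⟨{i, j}, (card_pair hij).ge, ?_, by rw [sum_pair hij, hi, hj, add_zero]⟩
    rw [card_compl, card_pair hij]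
    omega
  have hzeros : #{i | v i = 0} ≤ 1 :=
    card_le_one.2 fun i hi j hj => by_contra fun hij =>
      hzero ⟨i, j, hij, (mem_filter.1 hi).2, (mem_filter.1 hj).2⟩
  have hnonzeros : Fintype.card ι - 2 ≤ #{i | v i ≠ 0} := by
    have := card_filter_add_card_filter_not (s := univ) (fun i => v i = 0)
    rw [card_univ] at this
    simp only [ne_eq]
    omega
  obtain ⟨T, hT, hTcard⟩ := exists_subset_card_eq hnonzeros
  have hV : ∀ A ⊆ T, ∑ i ∈ A, v i ∈ ({f | ∑ c, f c = 0} : Finset (Fin k → G)) := by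
    intro A _
    rw [mem_filter, Fintype.sum_congr _ _ fun c => Finset.sum_apply c A v, sum_comm]
    exact ⟨mem_univ _, sum_eq_zero fun i _ => hv i⟩
  obtain ⟨S, hST, hS, hsum⟩ :=
    ZModModule.exists_two_le_card_subset_sum_eq_zero v
      (fun i hi => (mem_filter.1 (hT hi)).2) hV
      (hTcard ▸ (card_filter_sum_eq_zero_le k).trans_lt hG)
  refine ⟨S, hS, ?_, hsum⟩
  have := card_le_card hST
  rw [card_compl]
  omega

theorem kimura3_prolongation_general (n k : ℕ) (hn : 8 < n) (hk4 : k ≤ 4)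
    (a1 a2 : Fin n → Fin k → ZMod 2 × ZMod 2)
    (hrow : ∀ i : Fin n,
      Multiset.map (fun c => a1 i c) (Finset.univ : Finset (Fin k)).val
        = Multiset.map (fun c => a2 i c) (Finset.univ : Finset (Fin k)).val) :
    ∃ S : Finset (Fin n), 2 ≤ S.card ∧ 2 ≤ Sᶜ.card ∧
      Multiset.map (fun c => ∑ i ∈ S, a1 i c) (Finset.univ : Finset (Fin k)).val
        = Multiset.map (fun c => ∑ i ∈ S, a2 i c) (Finset.univ : Finset (Fin k)).val := by
  have hrowsum : ∀ i, ∑ c, (a1 i - a2 i) c = 0 := fun i => by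
    simp only [Pi.sub_apply, sum_sub_distrib, sub_eq_zero]
    exact congrArg Multiset.sum (hrow i)
  have hcard : Fintype.card (ZMod 2 × ZMod 2) ^ (k - 1) < 2 ^ (Fintype.card (Fin n) - 2) :=
    calc Fintype.card (ZMod 2 × ZMod 2) ^ (k - 1) = 4 ^ (k - 1) := by simp
      _ ≤ 4 ^ 3 := Nat.pow_le_pow_right (by norm_num) (by omega)
      _ < 2 ^ 7 := by norm_num
      _ ≤ 2 ^ (Fintype.card (Fin n) - 2) := Nat.pow_le_pow_right (by norm_num) (by simp; omega)
  obtain ⟨S, hS, hSc, hsum⟩ := exists_two_le_card_compl_sum_eq_zero (by simp; omega) hcard _ hrowsum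
  refine ⟨S, hS, hSc, congrArg (Multiset.map · _) (funext fun c => ?_)⟩
  rw [sum_sub_distrib, sub_eq_zero] at hsum
  simpa only [Finset.sum_apply] using congrFun hsum c

/-- Let `n > 8`, `1 ≤ k ≤ 4`, and let `a1 a2 : Fin n → Fin k → ZMod 2 × ZMod 2` be
matrices (for the 3-Kimura group) such that every column of each sums to zero and, for
every row `i`, the multiset of entries of the `i`-th row of `a1` equals that of `a2`.
Then there is a subset `S ⊆ Fin n` with `2 ≤ |S|` and `2 ≤ |Fin n \ S|` such that the
multiset of column sums of `a1` over `S` equals that of `a2` over `S`. -/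
theorem kimura3_prolongation (n k : ℕ) (hn : 8 < n) (hk1 : 1 ≤ k) (hk4 : k ≤ 4)
    (a1 a2 : Fin n → Fin k → ZMod 2 × ZMod 2)
    (h1 : ∀ c : Fin k, ∑ i : Fin n, a1 i c = 0)
    (h2 : ∀ c : Fin k, ∑ i : Fin n, a2 i c = 0)
    (hrow : ∀ i : Fin n,
      Multiset.map (fun c => a1 i c) (Finset.univ : Finset (Fin k)).val
        = Multiset.map (fun c => a2 i c) (Finset.univ : Finset (Fin k)).val) :
    ∃ S : Finset (Fin n), 2 ≤ S.card ∧ 2 ≤ Sᶜ.card ∧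
      Multiset.map (fun c => ∑ i ∈ S, a1 i c) (Finset.univ : Finset (Fin k)).val
        = Multiset.map (fun c => ∑ i ∈ S, a2 i c) (Finset.univ : Finset (Fin k)).val :=
  kimura3_prolongation_general n k hn hk4 a1 a2 hrow
end

section
/- Let T be a finite tree rooted at a non-leaf vertex, let G1 and G2 be finite abelian groups, and let ι : G1 → G2 be an injective group homomorphism. If the set V_{T,G1} of vertex vectors of flows of (T,G1) is not normal, then the set V_{T,G2} of vertex vectors of flows of (T,G2) is not normal. -/
open Pointwise

/-- The canonical map `ℤ^N → ℝ^N`. -/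
def toReal {N : Type} (x : N → ℤ) : N → ℝ := fun i => (x i : ℝ)

/-- A finite set `V ⊆ ℤ^N` is normal if for every positive integer `k`, every point of
`ℤ^N` lying both in the dilated polytope `k • convexHull ℝ V` and in the additive
subgroup of `ℤ^N` generated by `V` is a sum of `k` elements of `V` (with repetition
allowed). -/
def IsNormalSet {N : Type} (V : Set (N → ℤ)) : Prop :=
  ∀ k : ℕ, 0 < k → ∀ x : N → ℤ,
    toReal x ∈ (k : ℝ) • convexHull ℝ (toReal '' V) →
    x ∈ AddSubgroup.closure V →
    ∃ l : Multiset (N → ℤ), (∀ v ∈ l, v ∈ V) ∧ Multiset.card l = k ∧ l.sum = x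

/-- The vertex vector of a flow `f`: the element of `ℤ^(E × G)` whose `(e,h)`
coordinate is `1` if `f e = h` and `0` otherwise. -/
def vertexVec (T : PhyloTree) {G : Type} [DecidableEq G] (f : T.Edge → G) :
    T.Edge × G → ℤ :=
  fun p => if f p.1 = p.2 then 1 else 0

/-- The set `V_{T,G}` of vertex vectors of all flows of `(T,G)`. -/
def flowVecs (T : PhyloTree) (G : Type) [AddCommGroup G] [DecidableEq G] :
    Set (T.Edge × G → ℤ) :=
  {v | ∃ f : T.Edge → G, T.IsFlow f ∧ v = vertexVec T f}

section Aux

open Classical in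
/-- Push a vector in `R^(E × G₁)` forward along `ι : G₁ → G₂`. -/
noncomputable def pushVec {E G₁ G₂ R : Type} [Semiring R] (ι : G₁ → G₂) :
    (E × G₁ → R) →ₗ[R] (E × G₂ → R) where
  toFun x p := if h : ∃ g, ι g = p.2 then x (p.1, h.choose) else 0
  map_add' x y := by ext p; by_cases h : ∃ g, ι g = p.2 <;> simp [h]
  map_smul' c x := by ext p; by_cases h : ∃ g, ι g = p.2 <;> simp [h]

open Classical in
lemma pushVec_apply_iota {E G₁ G₂ R : Type} [Semiring R] {ι : G₁ → G₂}
    (hι : Function.Injective ι) (x : E × G₁ → R) (e : E) (g : G₁) :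
    pushVec ι x (e, ι g) = x (e, g) := by
  have h : ∃ g', ι g' = ι g := ⟨g, rfl⟩
  have hg : h.choose = g := hι h.choose_spec
  simp only [pushVec, LinearMap.coe_mk, AddHom.coe_mk]
  rw [dif_pos h, hg]

open Classical in
lemma pushVec_apply_not_mem {E G₁ G₂ R : Type} [Semiring R] {ι : G₁ → G₂}
    (x : E × G₁ → R) (p : E × G₂) (hp : ¬ ∃ g, ι g = p.2) :
    pushVec ι x p = 0 := by
  simp only [pushVec, LinearMap.coe_mk, AddHom.coe_mk]
  rw [dif_neg hp]

lemma pushVec_injective {E G₁ G₂ R : Type} [Semiring R] {ι : G₁ → G₂}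
    (hι : Function.Injective ι) :
    Function.Injective (pushVec (E := E) (R := R) ι) := by
  intro x y hxy
  funext p
  have := congrFun hxy (p.1, ι p.2)
  rwa [pushVec_apply_iota hι, pushVec_apply_iota hι] at this

open Classical in
lemma toReal_pushVec {E G₁ G₂ : Type} (ι : G₁ → G₂) (x : E × G₁ → ℤ) :
    toReal (pushVec ι x) = pushVec ι (toReal x) := by
  funext p
  simp only [toReal, pushVec, LinearMap.coe_mk, AddHom.coe_mk]
  by_cases h : ∃ g, ι g = p.2
  · rw [dif_pos h, dif_pos h]
  · rw [dif_neg h, dif_neg h, Int.cast_zero]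

lemma pushVec_vertexVec (T : PhyloTree) {G₁ G₂ : Type} [DecidableEq G₁] [DecidableEq G₂]
    {ι : G₁ → G₂} (hι : Function.Injective ι) (f : T.Edge → G₁) :
    pushVec ι (vertexVec T f) = vertexVec T (ι ∘ f) := by
  classical
  funext p
  obtain ⟨e, q⟩ := p
  by_cases h : ∃ g, ι g = q
  · obtain ⟨g, rfl⟩ := h
    rw [pushVec_apply_iota hι]
    simp only [vertexVec, Function.comp_apply]
    by_cases hf : f e = g
    · rw [if_pos hf, if_pos (by rw [hf])]
    · rw [if_neg hf, if_neg (fun hc => hf (hι hc))]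
  · rw [pushVec_apply_not_mem _ _ h]
    simp only [vertexVec, Function.comp_apply]
    rw [if_neg (fun hc => h ⟨f e, hc⟩)]

lemma sum_ite_map (T : PhyloTree) {G₁ G₂ : Type} [AddCommGroup G₁] [AddCommGroup G₂]
    (ι : G₁ →+ G₂) (f : T.Edge → G₁) (P : T.Edge → Prop) [DecidablePred P] :
    (∑ e : T.Edge, if P e then ι (f e) else 0) = ι (∑ e : T.Edge, if P e then f e else 0) := by
  rw [map_sum]
  refine Finset.sum_congr rfl fun e _ => ?_
  split <;> simp

lemma isFlow_comp_iff (T : PhyloTree) {G₁ G₂ : Type} [AddCommGroup G₁] [AddCommGroup G₂]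
    (ι : G₁ →+ G₂) (hι : Function.Injective ι) (f : T.Edge → G₁) :
    T.IsFlow (⇑ι ∘ f) ↔ T.IsFlow f := by
  classical
  unfold PhyloTree.IsFlow
  have h1 : ∀ (P : T.Edge → Prop) (_ : DecidablePred P),
      (∑ e : T.Edge, if P e then (⇑ι ∘ f) e else 0)
        = ι (∑ e : T.Edge, if P e then f e else 0) := by
    intro P _
    simpa using sum_ite_map T ι f P
  rw [h1 _ inferInstance]
  constructor
  · rintro ⟨hz, hv⟩
    refine ⟨hι (by rw [hz, map_zero]), fun e he => ?_⟩
    have := hv e he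
    rw [h1 _ inferInstance] at this
    exact hι this
  · rintro ⟨hz, hv⟩
    refine ⟨by rw [hz, map_zero], fun e he => ?_⟩
    rw [h1 _ inferInstance, Function.comp_apply, hv e he]

lemma multiset_lift {α β : Type} (M : α → β) (P : α → Prop) :
    ∀ l : Multiset β, (∀ v ∈ l, ∃ w, P w ∧ M w = v) →
      ∃ l' : Multiset α, (∀ w ∈ l', P w) ∧ l'.map M = l := by
  intro l
  induction l using Multiset.induction with
  | empty => exact fun _ => ⟨0, by simp, by simp⟩
  | cons a s ih =>
    intro hyp
    obtain ⟨w, hw, hwM⟩ := hyp a (Multiset.mem_cons_self a s)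
    obtain ⟨l', hl', hmap⟩ := ih fun v hv => hyp v (Multiset.mem_cons_of_mem hv)
    refine ⟨w ::ₘ l', ?_, by simp [hmap, hwM]⟩
    intro u hu
    rcases Multiset.mem_cons.1 hu with h | h
    · exact h ▸ hw
    · exact hl' u h

end Aux

/-- Let `T` be a finite tree rooted at a non-leaf vertex, `G₁` and `G₂` finite abelian
groups, and `ι : G₁ → G₂` an injective group homomorphism.  If the set of vertex
vectors of flows of `(T,G₁)` is not normal, then neither is that of `(T,G₂)`. -/
theorem not_normal_of_subgroup (T : PhyloTree) (hroot : T.degree T.root ≠ 1)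
    (G₁ G₂ : Type) [AddCommGroup G₁] [Fintype G₁] [DecidableEq G₁]
    [AddCommGroup G₂] [Fintype G₂] [DecidableEq G₂]
    (ι : G₁ →+ G₂) (hι : Function.Injective ι)
    (h : ¬ IsNormalSet (flowVecs T G₁)) :
    ¬ IsNormalSet (flowVecs T G₂) := by
  intro h2
  apply h
  intro k hk x hx hcl
  -- push everything forward along ι
  set Φ : (T.Edge × G₁ → ℤ) →ₗ[ℤ] (T.Edge × G₂ → ℤ) := pushVec ⇑ι
  set L : (T.Edge × G₁ → ℝ) →ₗ[ℝ] (T.Edge × G₂ → ℝ) := pushVec ⇑ι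
  have himg : ∀ v ∈ flowVecs T G₁, Φ v ∈ flowVecs T G₂ := by
    rintro v ⟨f, hf, rfl⟩
    exact ⟨⇑ι ∘ f, (isFlow_comp_iff T ι hι f).2 hf, (pushVec_vertexVec T hι f).symm.symm⟩
  -- convex hull condition
  have hhull : toReal (Φ x) ∈ (k : ℝ) • convexHull ℝ (toReal '' flowVecs T G₂) := by
    obtain ⟨y, hy, hyx⟩ := hx
    have hyx' : (k : ℝ) • y = toReal x := hyx
    have hmem : L y ∈ convexHull ℝ (toReal '' flowVecs T G₂) := by
      have h1 : L y ∈ convexHull ℝ (L '' (toReal '' flowVecs T G₁)) := by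
        rw [← L.image_convexHull]
        exact Set.mem_image_of_mem _ hy
      refine convexHull_mono ?_ h1
      rintro _ ⟨_, ⟨v, hv, rfl⟩, rfl⟩
      exact ⟨Φ v, himg v hv, toReal_pushVec ⇑ι v⟩
    have key : toReal (Φ x) = (k : ℝ) • L y := by
      show toReal (pushVec ⇑ι x) = _
      rw [toReal_pushVec, ← hyx']
      exact map_smul L (k : ℝ) y
    rw [key]
    exact Set.smul_mem_smul_set hmem
  -- closure condition
  have hclo : Φ x ∈ AddSubgroup.closure (flowVecs T G₂) := by
    have : AddSubgroup.closure (flowVecs T G₁) ≤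
        (AddSubgroup.closure (flowVecs T G₂)).comap Φ.toAddMonoidHom := by
      rw [AddSubgroup.closure_le]
      exact fun v hv => AddSubgroup.subset_closure (himg v hv)
    exact this hcl
  obtain ⟨l, hlmem, hlcard, hlsum⟩ := h2 k hk (Φ x) hhull hclo
  -- each element of l comes from a G₁-flow
  have hpre : ∀ v ∈ l, ∃ w, w ∈ flowVecs T G₁ ∧ Φ w = v := by
    intro v hv
    obtain ⟨f, hf, rfl⟩ := hlmem v hv
    have hrange : ∀ e : T.Edge, ∃ g, ι g = f e := by
      intro e
      by_contra hc
      have hzero : l.sum (e, f e) = 0 := by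
        rw [hlsum]; exact pushVec_apply_not_mem x (e, f e) hc
      have hsum : (l.map (fun u => u (e, f e))).sum = 0 := by
        rw [← hzero]
        exact ((Pi.evalAddMonoidHom (fun _ : T.Edge × G₂ => ℤ) (e, f e)).map_multiset_sum l).symm
      have hone : (1 : ℤ) ≤ (l.map (fun u => u (e, f e))).sum := by
        have hmem : vertexVec T f (e, f e) ∈ l.map (fun u => u (e, f e)) :=
          Multiset.mem_map_of_mem _ hv
        have h1 : vertexVec T f (e, f e) = 1 := by simp [vertexVec]
        have hnn : ∀ z ∈ l.map (fun u => u (e, f e)), (0 : ℤ) ≤ z := by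
          intro z hz
          obtain ⟨u, hu, hz'⟩ := Multiset.mem_map.1 hz
          obtain ⟨f', _, hu'⟩ := hlmem u hu
          have hz2 : z = vertexVec T f' (e, f e) := by rw [← hz', hu']
          rw [hz2]
          simp only [vertexVec]
          split <;> norm_num
        have hle := Multiset.single_le_sum hnn _ hmem
        exact le_of_eq_of_le h1.symm hle
      rw [hsum] at hone
      exact absurd hone (by norm_num)
    choose g hg using hrange
    refine ⟨vertexVec T g, ⟨g, ?_, rfl⟩, ?_⟩
    · have hgf : ⇑ι ∘ g = f := funext hg
      exact (isFlow_comp_iff T ι hι g).1 (hgf ▸ hf)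
    · have hgf : ⇑ι ∘ g = f := funext hg
      rw [show Φ (vertexVec T g) = pushVec ⇑ι (vertexVec T g) from rfl,
        pushVec_vertexVec T hι g, hgf]
  obtain ⟨l', hl'mem, hl'map⟩ := multiset_lift Φ (· ∈ flowVecs T G₁) l hpre
  refine ⟨l', hl'mem, ?_, ?_⟩
  · rw [← hlcard, ← hl'map, Multiset.card_map]
  · apply pushVec_injective (E := T.Edge) (R := ℤ) hι
    show Φ l'.sum = Φ x
    rw [map_multiset_sum, hl'map, hlsum]
end

section
/- For each of the groups G = ZMod 6, G = ZMod 8, G = ZMod 2 × ZMod 2 × ZMod 2, and G = ZMod 4 × ZMod 2, the set V_{3,G} ⊆ ℤ^(Fin 3 × G) of vertex vectors of sockets of the tripod K_{3,1} is not normal; hence the associated affine toric variety is not normal. -/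
/-!
Each of the four groups contains an element `u` of order 2 and elements `a, b` such that the
eight sockets with first two legs `(εa + su, εb + tu)`, `ε, s, t ∈ {0, 1}`, hit every value of
every leg in their support exactly twice. Half the sum of their vertex vectors is then a
0/1-vector `x` in `4 • conv V`, and an explicit integer combination puts `x` in the lattice of `V`.
A decomposition of `x` into four vertex vectors can only use sockets whose legs all lie in the
support of `x`, and these are the eight cube sockets. Each value of the first two legs is used
once, so within each half `ε` the two chosen sockets are `(s, t)` and `(1 - s, 1 - t)`; since
`2u = 0` they share their third leg, a value that `x` allows only once.
-/

open Pointwise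

/-- The vertex vector of a socket `g : Fin 3 → G` of the tripod `K_{3,1}`: the element
of `ℤ^(Fin 3 × G)` with coordinate `(i,h)` equal to `1` if `g i = h` and `0` otherwise. -/
def socketVec {G : Type} [DecidableEq G] (g : Fin 3 → G) : Fin 3 × G → ℤ :=
  fun p => if g p.1 = p.2 then 1 else 0

/-- The set `V_{3,G} ⊆ ℤ^(Fin 3 × G)` of vertex vectors of all sockets of the tripod
`K_{3,1}` (a socket is a function `g : Fin 3 → G` with `∑ i, g i = 0`). -/
def tripodVecs (G : Type) [AddCommGroup G] [DecidableEq G] : Set (Fin 3 × G → ℤ) :=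
  {v | ∃ g : Fin 3 → G, (∑ i : Fin 3, g i = 0) ∧ v = socketVec g}

open Finset

section Normality

variable {N : Type}

lemma toReal_mem_smul_convexHull {ι : Type} [Fintype ι] {V : Set (N → ℤ)} {v : ι → N → ℤ}
    (hv : ∀ j, v j ∈ V) {m k : ℕ} (hm : 0 < m) (hk : 0 < k) (hcard : Fintype.card ι = m * k)
    {x : N → ℤ} (hsum : ∑ j, v j = m • x) :
    toReal x ∈ (k : ℝ) • convexHull ℝ (toReal '' V) := by
  have hmem : univ.centerMass (fun _ => (1 : ℝ)) (fun j => toReal (v j)) ∈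
      convexHull ℝ (toReal '' V) :=
    centerMass_mem_convexHull _ (fun _ _ => zero_le_one) (by simp [hcard]; positivity)
      fun j _ => Set.mem_image_of_mem _ (hv j)
  have hsumR : ∑ j, toReal (v j) = (m : ℝ) • toReal x := by
    ext n
    simpa [toReal, Finset.sum_apply] using congr_arg (fun y : N → ℤ => (y n : ℝ)) hsum
  have hcenter : univ.centerMass (fun _ => (1 : ℝ)) (fun j => toReal (v j)) =
      (k : ℝ)⁻¹ • toReal x := by
    rw [centerMass, sum_const, card_univ, hcard, nsmul_one]
    simp only [one_smul, hsumR, smul_smul, Nat.cast_mul]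
    congr 1
    field_simp
  rw [Set.mem_smul_set_iff_inv_smul_mem₀ (by positivity), ← hcenter]
  exact hmem

lemma Multiset.exists_fin_tuple_sum_eq {M ι : Type} [AddCommMonoid M] {F : ι → M} {l : Multiset M}
    (hl : ∀ v ∈ l, v ∈ Set.range F) : ∃ j : Fin (Multiset.card l) → ι, ∑ i, F (j i) = l.sum := by
  induction l using Multiset.induction_on with
  | empty =>
    rw [Multiset.card_zero]
    exact ⟨Fin.elim0, by simp⟩
  | cons a l ih =>
    obtain ⟨i₀, rfl⟩ := hl _ (Multiset.mem_cons_self _ l)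
    obtain ⟨j, hj⟩ := ih fun v hv => hl v (Multiset.mem_cons_of_mem hv)
    rw [Multiset.card_cons]
    refine ⟨Fin.cons i₀ j, ?_⟩
    simp only [Fin.sum_univ_succ, Fin.cons_zero, Fin.cons_succ, hj, Multiset.sum_cons]

theorem not_isNormalSet_of_certificate {ι : Type} [Fintype ι] {V : Set (N → ℤ)}
    (hV : ∀ v ∈ V, 0 ≤ v) {F : ι → N → ℤ} (hF : ∀ j, F j ∈ V) {m k : ℕ} (hm : 0 < m) (hk : 0 < k)
    (hcard : Fintype.card ι = m * k) {x : N → ℤ} (hconv : ∑ j, F j = m • x)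
    (hlat : x ∈ AddSubgroup.closure V) (hbelow : ∀ v ∈ V, v ≤ x → v ∈ Set.range F)
    (hx : ∀ j : Fin k → ι, ∑ i, F (j i) ≠ x) : ¬ IsNormalSet V := by
  intro hN
  obtain ⟨l, hlV, rfl, hl⟩ := hN k hk x (toReal_mem_smul_convexHull hF hm hk hcard hconv) hlat
  obtain ⟨j, hj⟩ := Multiset.exists_fin_tuple_sum_eq (F := F) (l := l) fun v hv =>
    hbelow v (hlV v hv) (hl ▸ Multiset.single_le_sum (fun w hw => hV w (hlV w hw)) v hv)
  exact hx j (hj.trans hl)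

end Normality

section Tripod

variable {G : Type}

lemma socketVec_nonneg [DecidableEq G] (g : Fin 3 → G) : 0 ≤ socketVec g := fun p => by
  unfold socketVec; split_ifs <;> simp

lemma pos_of_socketVec_le [DecidableEq G] {g : Fin 3 → G} {x : Fin 3 × G → ℤ}
    (h : socketVec g ≤ x) (i : Fin 3) : 0 < x (i, g i) := by
  simpa [socketVec, Int.lt_iff_add_one_le] using h (i, g i)

variable [AddCommGroup G]

def socketOf (q : G × G) : Fin 3 → G := ![q.1, q.2, -(q.1 + q.2)]

lemma sum_socketOf (q : G × G) : ∑ i, socketOf q i = 0 := by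
  simp [socketOf, Fin.sum_univ_three]

lemma socketOf_eq {g : Fin 3 → G} (hg : ∑ i, g i = 0) : socketOf (g 0, g 1) = g := by
  rw [Fin.sum_univ_three, add_eq_zero_iff_eq_neg'] at hg
  ext i
  fin_cases i <;> simp [socketOf, hg]

variable [DecidableEq G]

lemma tripodVecs_eq_range : tripodVecs G = Set.range fun q => socketVec (socketOf q) := by
  ext v
  constructor
  · rintro ⟨g, hg, rfl⟩
    exact ⟨(g 0, g 1), congrArg socketVec (socketOf_eq hg)⟩
  · rintro ⟨q, rfl⟩
    exact ⟨socketOf q, sum_socketOf q, rfl⟩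

theorem not_isNormalSet_tripodVecs_of_certificate {ι κ : Type} [Fintype ι] [Fintype κ] {m k : ℕ}
    (hm : 0 < m) (hk : 0 < k) (hcard : Fintype.card ι = m * k) (f : ι → G × G)
    (x : Fin 3 × G → ℤ) (c : κ → ℤ) (p : κ → G × G)
    (hconv : ∑ j, socketVec (socketOf (f j)) = m • x)
    (hlat : ∑ j, c j • socketVec (socketOf (p j)) = x)
    (hsupp : ∀ q, (∀ i, 0 < x (i, socketOf q i)) → ∃ j, f j = q)
    (hx : ∀ j : Fin k → ι, ∑ i, socketVec (socketOf (f (j i))) ≠ x) :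
    ¬ IsNormalSet (tripodVecs G) := by
  have hmem (q : G × G) : socketVec (socketOf q) ∈ tripodVecs G := ⟨_, sum_socketOf q, rfl⟩
  refine not_isNormalSet_of_certificate (fun v hv => ?_) (fun j => hmem (f j)) hm hk hcard hconv
    ?_ (fun v hv hle => ?_) hx
  · obtain ⟨g, -, rfl⟩ := hv
    exact socketVec_nonneg g
  · rw [← hlat]
    exact AddSubgroup.sum_mem _ fun j _ =>
      AddSubgroup.zsmul_mem _ (AddSubgroup.subset_closure (hmem _)) _
  · rw [tripodVecs_eq_range] at hv
    obtain ⟨q, rfl⟩ := hv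
    obtain ⟨j, rfl⟩ := hsupp q (pos_of_socketVec_le hle)
    exact ⟨j, rfl⟩

def cubeSocket (u a b : G) : Bool × Bool × Bool → G × G
  | (e, s, t) =>
    ((bif e then a else 0) + (bif s then u else 0), (bif e then b else 0) + (bif t then u else 0))

def cubeVec (u a b : G) : Fin 3 × G → ℤ :=
  fun p => if ∃ j, socketOf (cubeSocket u a b j) p.1 = p.2 then 1 else 0

theorem not_isNormalSet_tripodVecs_of_cube {κ : Type} [Fintype κ] (u a b : G) (c : κ → ℤ)
    (p : κ → G × G)
    (hconv : ∑ j, socketVec (socketOf (cubeSocket u a b j)) = 2 • cubeVec u a b)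
    (hlat : ∑ j, c j • socketVec (socketOf (p j)) = cubeVec u a b)
    (hsupp : ∀ q, (∀ i, 0 < cubeVec u a b (i, socketOf q i)) → ∃ j, cubeSocket u a b j = q)
    (hx : ∀ j₁ j₂ j₃ j₄, socketVec (socketOf (cubeSocket u a b j₁)) +
      (socketVec (socketOf (cubeSocket u a b j₂)) + (socketVec (socketOf (cubeSocket u a b j₃)) +
        socketVec (socketOf (cubeSocket u a b j₄)))) ≠ cubeVec u a b) :
    ¬ IsNormalSet (tripodVecs G) :=
  not_isNormalSet_tripodVecs_of_certificate (m := 2) (k := 4) two_pos four_pos rfl _ _ c p hconv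
    hlat hsupp (by
      simpa only [Fin.forall_fin_succ_pi, Fin.forall_fin_zero_pi, Fin.sum_univ_succ,
        Fin.sum_univ_zero, Fin.cons_zero, Fin.cons_succ, add_zero] using hx)

end Tripod

theorem not_isNormalSet_tripodVecs_zmod6 : ¬ IsNormalSet (tripodVecs (ZMod 6)) :=
  not_isNormalSet_tripodVecs_of_cube 3 1 1 ![1, -1, 1, 1, -1, -1, 1, 1, 1, 1]
    ![(0, 1), (1, 0), (1, 1), (1, 2), (2, 1), (2, 2), (2, 3), (2, 4), (3, 0), (4, 0)]
    (by decide +kernel) (by decide +kernel) (by decide +kernel) (by decide +kernel)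

theorem not_isNormalSet_tripodVecs_zmod8 : ¬ IsNormalSet (tripodVecs (ZMod 8)) :=
  not_isNormalSet_tripodVecs_of_cube 4 1 1 ![1, -1, 1, 1, 1, -1, -1, -1, -1, 1, 1, 1, 1, 1]
    ![(0, 1), (1, 0), (1, 1), (1, 2), (1, 3), (1, 6), (2, 1), (2, 2), (2, 3), (2, 4), (2, 5),
      (2, 6), (4, 0), (5, 0)]
    (by decide +kernel) (by decide +kernel) (by decide +kernel) (by decide +kernel)

theorem not_isNormalSet_tripodVecs_zmod2_prod_zmod2_prod_zmod2 :
    ¬ IsNormalSet (tripodVecs (ZMod 2 × ZMod 2 × ZMod 2)) :=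
  not_isNormalSet_tripodVecs_of_cube (0, 0, 1) (0, 1, 0) (1, 0, 0) ![1, 1, 1, -1, -1, 1, 1, 1]
    ![((0, 0, 0), (0, 1, 0)), ((0, 0, 1), (0, 0, 0)), ((0, 0, 1), (0, 0, 1)),
      ((0, 0, 1), (0, 1, 0)), ((0, 1, 0), (0, 0, 0)), ((0, 1, 0), (1, 0, 0)),
      ((0, 1, 0), (1, 0, 1)), ((0, 1, 1), (0, 0, 0))]
    (by decide +kernel) (by decide +kernel) (by decide +kernel) (by decide +kernel)

theorem not_isNormalSet_tripodVecs_zmod4_prod_zmod2 :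
    ¬ IsNormalSet (tripodVecs (ZMod 4 × ZMod 2)) :=
  not_isNormalSet_tripodVecs_of_cube (0, 1) (1, 0) (1, 0) ![1, 1, 1, -1, -1, 1, 1, 1]
    ![((0, 0), (1, 0)), ((0, 1), (0, 0)), ((0, 1), (0, 1)), ((0, 1), (1, 0)), ((1, 0), (0, 0)),
      ((1, 0), (1, 0)), ((1, 0), (1, 1)), ((1, 1), (0, 0))]
    (by decide +kernel) (by decide +kernel) (by decide +kernel) (by decide +kernel)

/-- For each of the groups `ℤ/6`, `ℤ/8`, `ℤ/2 × ℤ/2 × ℤ/2` and `ℤ/4 × ℤ/2`, the set of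
vertex vectors of sockets of the tripod `K_{3,1}` is not normal; hence the associated
affine toric variety is not normal. -/
theorem tripod_not_normal_examples :
    ¬ IsNormalSet (tripodVecs (ZMod 6)) ∧
    ¬ IsNormalSet (tripodVecs (ZMod 8)) ∧
    ¬ IsNormalSet (tripodVecs (ZMod 2 × ZMod 2 × ZMod 2)) ∧
    ¬ IsNormalSet (tripodVecs (ZMod 4 × ZMod 2)) :=
  ⟨not_isNormalSet_tripodVecs_zmod6, not_isNormalSet_tripodVecs_zmod8,
    not_isNormalSet_tripodVecs_zmod2_prod_zmod2_prod_zmod2,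
    not_isNormalSet_tripodVecs_zmod4_prod_zmod2⟩
end

section
/- Let G = ZMod 6 and let V = V_{3,G} ⊆ ℤ^(Fin 3 × G) be the set of vertex vectors of sockets of the tripod. For every v_0 ∈ V there exists a point x of ℤ^(Fin 3 × G) lying in the additive subgroup generated by {v − v_0 : v ∈ V} and in the convex cone of all nonnegative real linear combinations of {v − v_0 : v ∈ V}, such that x is not a finite sum of elements of {v − v_0 : v ∈ V}. In other words, the polytope of the tripod for ZMod 6 is not very ample, and the associated projective toric variety is not normal. -/
open Pointwise

/-!
Translating row `i` of `ℤ^(Fin 3 × G)` by `c i` permutes coordinates, and for a socket `c` it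
carries the differences from `socketVec 0` onto the differences from `socketVec c`; so it
suffices to treat `v₀ = socketVec 0`. There take the point `x` each of whose rows is
`e₁ + e₃ + e₄ - 3 e₀`: it is an integer combination of five differences, and `2 x` is the sum
of the differences of the seven nonzero sockets with values in `{0, 1, 3, 4}`. If `x` were a
sum of differences, counting the entries in `{2, 5}` (nonnegative on every difference, zero on
`x`) shows that no socket used takes the values `2` or `5`; such a socket takes the value `3`
an even number of times, whereas `x` has three entries at `3`.
-/

open Finset

section Hole

variable {N N' : Type}

def IsInRealCone (S : Set (N → ℤ)) (x : N → ℤ) : Prop :=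
  ∃ (s : Finset (N → ℤ)) (w : (N → ℤ) → ℝ),
    (∀ u ∈ s, 0 ≤ w u ∧ u ∈ S) ∧ toReal x = ∑ u ∈ s, w u • toReal u

def IsHole (S : Set (N → ℤ)) (x : N → ℤ) : Prop :=
  x ∈ AddSubgroup.closure S ∧ IsInRealCone S x ∧
    ¬ ∃ l : Multiset (N → ℤ), (∀ u ∈ l, u ∈ S) ∧ l.sum = x

lemma toReal_funCongrLeft (e : N ≃ N') (x : N' → ℤ) :
    toReal (LinearEquiv.funCongrLeft ℤ ℤ e x) = LinearEquiv.funCongrLeft ℝ ℝ e (toReal x) :=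
  rfl

lemma IsInRealCone.image_funCongrLeft {S : Set (N' → ℤ)} {x : N' → ℤ} (e : N ≃ N')
    (h : IsInRealCone S x) :
    IsInRealCone (LinearEquiv.funCongrLeft ℤ ℤ e '' S) (LinearEquiv.funCongrLeft ℤ ℤ e x) := by
  classical
  obtain ⟨s, w, hsw, hx⟩ := h
  set f := LinearEquiv.funCongrLeft ℤ ℤ e
  refine ⟨s.image f, w ∘ f.symm, fun v hv => ?_, ?_⟩
  · obtain ⟨u, hu, rfl⟩ := mem_image.mp hv
    exact ⟨by simpa using (hsw u hu).1, Set.mem_image_of_mem f (hsw u hu).2⟩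
  · rw [sum_image fun u _ v _ huv => f.injective huv, toReal_funCongrLeft, hx, map_sum]
    simp only [f, Function.comp_apply, LinearEquiv.symm_apply_apply, map_smul,
      toReal_funCongrLeft]

lemma IsHole.image_funCongrLeft {S : Set (N' → ℤ)} {x : N' → ℤ} (e : N ≃ N')
    (h : IsHole S x) :
    IsHole (LinearEquiv.funCongrLeft ℤ ℤ e '' S) (LinearEquiv.funCongrLeft ℤ ℤ e x) := by
  set f := LinearEquiv.funCongrLeft ℤ ℤ e
  obtain ⟨hgrp, hcone, hsum⟩ := h
  refine ⟨?_, hcone.image_funCongrLeft e, ?_⟩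
  · have := AddSubgroup.mem_map_of_mem (f : (N' → ℤ) →+ (N → ℤ)) hgrp
    rwa [AddMonoidHom.map_closure] at this
  · rintro ⟨l, hl, hlx⟩
    refine hsum ⟨l.map f.symm, fun u hu => ?_, ?_⟩
    · obtain ⟨v, hv, rfl⟩ := Multiset.mem_map.mp hu
      obtain ⟨w, hw, rfl⟩ := hl v hv
      simpa using hw
    · rw [← map_multiset_sum, hlx, LinearEquiv.symm_apply_apply]

lemma isInRealCone_of_nsmul_eq_sum {S : Set (N → ℤ)} {x : N → ℤ} {n : ℕ} (hn : n ≠ 0)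
    (s : Finset (N → ℤ)) (hsS : ∀ u ∈ s, u ∈ S) (hx : n • x = ∑ u ∈ s, u) :
    IsInRealCone S x := by
  refine ⟨s, fun _ => (n : ℝ)⁻¹, fun u hu => ⟨by positivity, hsS u hu⟩, ?_⟩
  funext p
  have hxp : (n : ℝ) * x p = ∑ u ∈ s, (u p : ℝ) := by
    have := congrFun hx p
    rw [Finset.sum_apply] at this
    exact_mod_cast this
  simp only [toReal, Finset.sum_apply, Pi.smul_apply, smul_eq_mul, ← mul_sum, ← hxp]
  field_simp

end Hole

lemma not_exists_multiset_sum_eq_of_two_dvd {M : Type} [AddCommMonoid M] {S : Set M} {x : M}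
    (ψ χ : M →+ ℤ) (hψ : ∀ u ∈ S, 0 ≤ ψ u) (hχ : ∀ u ∈ S, ψ u = 0 → 2 ∣ χ u)
    (hψx : ψ x = 0) (hχx : ¬ 2 ∣ χ x) :
    ¬ ∃ l : Multiset M, (∀ u ∈ l, u ∈ S) ∧ l.sum = x := by
  rintro ⟨l, hlS, rfl⟩
  have hψl : ∀ u ∈ l, ψ u = 0 := by
    have hnonneg : ∀ z ∈ l.map ψ, 0 ≤ z :=
      Multiset.forall_mem_map_iff.mpr fun u hu => hψ u (hlS u hu)
    intro u hu
    refine le_antisymm ?_ (hψ u (hlS u hu))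
    calc ψ u ≤ (l.map ψ).sum := Multiset.single_le_sum hnonneg _ (Multiset.mem_map_of_mem ψ hu)
      _ = 0 := by rw [← map_multiset_sum, hψx]
  apply hχx
  rw [map_multiset_sum]
  exact Multiset.dvd_sum <| Multiset.forall_mem_map_iff.mpr fun u hu => hχ u (hlS u hu) (hψl u hu)

section Tripod

variable {G : Type} [AddCommGroup G]

lemma eq_vecCons_of_sum_eq_zero {g : Fin 3 → G} (hg : ∑ i, g i = 0) :
    g = ![g 0, g 1, -(g 0 + g 1)] := by
  rw [Fin.sum_univ_three] at hg
  funext i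
  fin_cases i
  · rfl
  · rfl
  · exact eq_neg_of_add_eq_zero_right hg

variable [DecidableEq G]

omit [AddCommGroup G] in
lemma socketVec_injective : Function.Injective (socketVec : (Fin 3 → G) → Fin 3 × G → ℤ) := by
  intro g g' h
  funext i
  simpa [socketVec, eq_comm] using congrFun h (i, g i)

def tripodShift (c : Fin 3 → G) : Fin 3 × G ≃ Fin 3 × G :=
  Equiv.prodShear (Equiv.refl _) fun i => Equiv.subRight (c i)

lemma funCongrLeft_tripodShift_socketVec (c g : Fin 3 → G) :
    LinearEquiv.funCongrLeft ℤ ℤ (tripodShift c) (socketVec g) = socketVec (g + c) := by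
  funext p
  simp [tripodShift, socketVec, LinearMap.funLeft_apply, eq_sub_iff_add_eq]

lemma image_funCongrLeft_tripodShift {c : Fin 3 → G} (hc : ∑ i, c i = 0) :
    LinearEquiv.funCongrLeft ℤ ℤ (tripodShift c) '' ((· - socketVec 0) '' tripodVecs G) =
      (· - socketVec c) '' tripodVecs G := by
  ext u
  simp only [Set.mem_image, tripodVecs, Set.mem_ofPred_eq]
  constructor
  · rintro ⟨_, ⟨_, ⟨g, hg, rfl⟩, rfl⟩, rfl⟩
    refine ⟨_, ⟨g + c, by simp [sum_add_distrib, hg, hc], rfl⟩, ?_⟩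
    rw [map_sub, funCongrLeft_tripodShift_socketVec, funCongrLeft_tripodShift_socketVec, zero_add]
  · rintro ⟨_, ⟨g, hg, rfl⟩, rfl⟩
    refine ⟨_, ⟨_, ⟨g - c, by simp [sum_sub_distrib, hg, hc], rfl⟩, rfl⟩, ?_⟩
    rw [map_sub, funCongrLeft_tripodShift_socketVec, funCongrLeft_tripodShift_socketVec,
      zero_add, sub_add_cancel]

variable [Fintype G]

def valueCount (T : Finset G) : (Fin 3 × G → ℤ) →+ ℤ where
  toFun y := ∑ p with p.2 ∈ T, y p
  map_zero' := by simp
  map_add' y z := by simp [sum_add_distrib]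

lemma valueCount_socketVec_sub {T : Finset G} (hT : 0 ∉ T) (g : Fin 3 → G) :
    valueCount T (socketVec g - socketVec 0) = #{i | g i ∈ T} := by
  simp [valueCount, socketVec, sum_filter, Fintype.sum_prod_type, hT]

end Tripod

def holeWitness : Fin 3 × ZMod 6 → ℤ :=
  socketVec (fun _ => 1) + socketVec (fun _ => 3) + socketVec (fun _ => 4) - 3 • socketVec 0

-- Values in `{0, 1, 3, 4}` are `0` or `1` mod 3, so either all three are in `{1, 4}` or all are
-- in `{0, 3}`; in the latter case the sum vanishing mod 2 makes the number of `3`s even.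
lemma even_card_eq_three_of_sum_eq_zero {g : Fin 3 → ZMod 6} (hg : ∑ i, g i = 0)
    (h : ∀ i, g i ∉ ({2, 5} : Finset (ZMod 6))) : Even #{i | g i = 3} := by
  rw [eq_vecCons_of_sum_eq_zero hg] at h ⊢
  generalize g 0 = a, g 1 = b at h ⊢
  revert a b
  decide

lemma holeWitness_mem_closure :
    holeWitness ∈ AddSubgroup.closure ((· - socketVec 0) '' tripodVecs (ZMod 6)) := by
  have mem (g : Fin 3 → ZMod 6) (hg : ∑ i, g i = 0) :
      socketVec g - socketVec 0 ∈ AddSubgroup.closure ((· - socketVec 0) '' tripodVecs (ZMod 6)) :=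
    AddSubgroup.subset_closure ⟨_, ⟨g, hg, rfl⟩, rfl⟩
  have hx : holeWitness = (socketVec ![0, 3, 3] - socketVec 0) + (socketVec ![1, 1, 4] - socketVec 0)
      + (socketVec ![3, 4, 5] - socketVec 0) + (socketVec ![4, 1, 1] - socketVec 0)
      - (socketVec ![0, 1, 5] - socketVec 0) := by
    funext p; revert p; decide
  rw [hx]
  exact sub_mem (add_mem (add_mem (add_mem (mem _ (by decide)) (mem _ (by decide)))
    (mem _ (by decide))) (mem _ (by decide))) (mem _ (by decide))

set_option maxRecDepth 100000 in
lemma isInRealCone_holeWitness :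
    IsInRealCone ((· - socketVec 0) '' tripodVecs (ZMod 6)) holeWitness := by
  let T : Finset (Fin 3 → ZMod 6) :=
    {![0, 3, 3], ![3, 0, 3], ![3, 3, 0], ![1, 1, 4], ![1, 4, 1], ![4, 1, 1], ![4, 4, 4]}
  refine isInRealCone_of_nsmul_eq_sum two_ne_zero (T.image (socketVec · - socketVec 0)) ?_ ?_
  · intro v hv
    obtain ⟨g, hg, rfl⟩ := mem_image.mp hv
    have hT : ∀ g ∈ T, ∑ i, g i = 0 := by decide
    exact ⟨_, ⟨g, hT g hg, rfl⟩, rfl⟩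
  · rw [sum_image fun g _ g' _ h => socketVec_injective (sub_left_injective h)]
    funext p; revert p; decide

lemma not_exists_multiset_sum_eq_holeWitness :
    ¬ ∃ l : Multiset (Fin 3 × ZMod 6 → ℤ),
      (∀ u ∈ l, u ∈ (· - socketVec 0) '' tripodVecs (ZMod 6)) ∧ l.sum = holeWitness := by
  refine not_exists_multiset_sum_eq_of_two_dvd (valueCount {2, 5}) (valueCount {3})
    ?_ ?_ (by decide) (by decide)
  · rintro _ ⟨_, ⟨g, -, rfl⟩, rfl⟩
    rw [valueCount_socketVec_sub (by decide)]
    positivity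
  · rintro _ ⟨_, ⟨g, hg, rfl⟩, rfl⟩
    rw [valueCount_socketVec_sub (by decide), valueCount_socketVec_sub (by decide),
      Nat.cast_eq_zero, card_eq_zero, filter_eq_empty_iff]
    intro h25
    simp only [mem_singleton]
    exact_mod_cast (even_card_eq_three_of_sum_eq_zero hg fun i => h25 (mem_univ i)).two_dvd

lemma isHole_holeWitness : IsHole ((· - socketVec 0) '' tripodVecs (ZMod 6)) holeWitness :=
  ⟨holeWitness_mem_closure, isInRealCone_holeWitness, not_exists_multiset_sum_eq_holeWitness⟩

/-- The polytope of the tripod for `G = ℤ/6` is not very ample: for every vertex vector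
`v₀ ∈ V = V_{3,ℤ/6}` there is a lattice point `x` lying in the subgroup generated by
`D = {v - v₀ : v ∈ V}` and in the convex cone of nonnegative real combinations of `D`,
which is not a finite sum of elements of `D`.  Hence the associated projective toric
variety is not normal. -/
theorem tripod_zmod6_not_very_ample :
    ∀ v₀ ∈ tripodVecs (ZMod 6),
      ∃ x : Fin 3 × ZMod 6 → ℤ,
        x ∈ AddSubgroup.closure ((fun v => v - v₀) '' tripodVecs (ZMod 6)) ∧
        (∃ (s : Finset (Fin 3 × ZMod 6 → ℤ)) (w : (Fin 3 × ZMod 6 → ℤ) → ℝ),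
          (∀ u ∈ s, 0 ≤ w u ∧ u ∈ (fun v => v - v₀) '' tripodVecs (ZMod 6)) ∧
          toReal x = ∑ u ∈ s, w u • toReal u) ∧
        ¬ ∃ l : Multiset (Fin 3 × ZMod 6 → ℤ),
            (∀ u ∈ l, u ∈ (fun v => v - v₀) '' tripodVecs (ZMod 6)) ∧ l.sum = x := by
  rintro _ ⟨c, hc, rfl⟩
  have h := isHole_holeWitness.image_funCongrLeft (tripodShift c)
  rw [image_funCongrLeft_tripodShift hc] at h
  exact ⟨_, h⟩
end
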